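/- arXiv:1510.01210 — 12 statements merged into one kernel-verified Lean document; each statement's English description precedes it below -/
import Mathlib

section
/- If a firm's choice function over contracts satisfies full substitutability (same-side substitutability and cross-side complementarity) and the Laws of Aggregate Demand and Supply, then it satisfies the irrelevance of rejected contracts (IRC) condition: for any set Y of the firm's contracts and any upstream contract z not chosen from Y ∪ {z}, the choice from Y ∪ {z} equals the choice from Y. -/
/-- Full substitutability together with the Laws of Aggregate Demand
and Supply implies the irrelevance of rejected contracts condition. -/
theorem fullSubst_ladlas_implies_irc {X : Type*} [Fintype X] [DecidableEq X]
    (XB XS : Finset X) (hpart : XB ∪ XS = Finset.univ) (hdisj : Disjoint XB XS)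
    (C : Finset X → Finset X) (hC : ∀ Y, C Y ⊆ Y)
    (CB CS RB RS : Finset X → Finset X → Finset X)
    (hCB : ∀ Y Z, CB Y Z = C ((Y ∩ XB) ∪ (Z ∩ XS)) ∩ XB)
    (hCS : ∀ Z Y, CS Z Y = C ((Z ∩ XS) ∪ (Y ∩ XB)) ∩ XS)
    (hRB : ∀ Y Z, RB Y Z = (Y ∩ XB) \ CB Y Z)
    (hRS : ∀ Z Y, RS Z Y = (Z ∩ XS) \ CS Z Y)
    (SSS_B : ∀ Y' Y Z, Y' ⊆ Y → RB Y' Z ⊆ RB Y Z)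
    (SSS_S : ∀ Z' Z Y, Z' ⊆ Z → RS Z' Y ⊆ RS Z Y)
    (CSC_B : ∀ Y Z' Z, Z' ⊆ Z → RB Y Z ⊆ RB Y Z')
    (CSC_S : ∀ Z Y' Y, Y' ⊆ Y → RS Z Y ⊆ RS Z Y')
    (LAD : ∀ Y' Y Z, Y' ⊆ Y →
      ((CS Z Y).card : ℤ) - (CS Z Y').card ≤ ((CB Y Z).card : ℤ) - (CB Y' Z).card)
    (LAS : ∀ Z' Z Y, Z' ⊆ Z →
      ((CB Y Z).card : ℤ) - (CB Y Z').card ≤ ((CS Z Y).card : ℤ) - (CS Z' Y).card)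
    (Y : Finset X) (z : X) (hz : z ∈ XB) (hzr : z ∉ C (insert z Y)) :
    C (insert z Y) = C Y := by
  classical
  by_cases hzY : z ∈ Y
  · rw [Finset.insert_eq_self.mpr hzY]
  have hzS : z ∉ XS := fun h => Finset.disjoint_left.mp hdisj hz h
  set Y' := insert z Y with hY'
  have hz' : z ∉ Y ∩ XB := fun h => hzY (Finset.mem_inter.mp h).1
  have hB' : Y' ∩ XB = insert z (Y ∩ XB) := Finset.insert_inter_of_mem hz
  have hS' : Y' ∩ XS = Y ∩ XS := Finset.insert_inter_of_notMem hzS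
  have hsplit : ∀ W : Finset X, W ∩ XB ∪ W ∩ XS = W := by
    intro W
    rw [← Finset.inter_union_distrib_left, hpart, Finset.inter_univ]
  have hCBW : ∀ W, CB W W = C W ∩ XB := by intro W; rw [hCB, hsplit]
  have hCSW : ∀ W, CS W W = C W ∩ XS := by
    intro W; rw [hCS, Finset.union_comm, hsplit]
  have hCBsub : ∀ W Z, CB W Z ⊆ W ∩ XB := by
    intro W Z x hx
    rw [hCB] at hx
    obtain ⟨hx1, hxB⟩ := Finset.mem_inter.mp hx
    rcases Finset.mem_union.mp (hC _ hx1) with h | h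
    · exact h
    · exact absurd (Finset.mem_inter.mp h).2
        (fun hS => Finset.disjoint_left.mp hdisj hxB hS)
  have hCSsub : ∀ Z W, CS Z W ⊆ Z ∩ XS := by
    intro Z W x hx
    rw [hCS] at hx
    obtain ⟨hx1, hxS⟩ := Finset.mem_inter.mp hx
    rcases Finset.mem_union.mp (hC _ hx1) with h | h
    · exact h
    · exact absurd (Finset.mem_inter.mp h).2
        (fun hB => Finset.disjoint_right.mp hdisj hxS hB)
  have hCBc : ∀ W Z, CB W Z = (W ∩ XB) \ RB W Z := by
    intro W Z; rw [hRB]; exact (Finset.sdiff_sdiff_eq_self (hCBsub W Z)).symm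
  have hCSc : ∀ Z W, CS Z W = (Z ∩ XS) \ RS Z W := by
    intro Z W; rw [hRS]; exact (Finset.sdiff_sdiff_eq_self (hCSsub Z W)).symm
  have cardB : ∀ W Z, (RB W Z).card + (CB W Z).card = (W ∩ XB).card := by
    intro W Z; rw [hRB]; exact Finset.card_sdiff_add_card_eq_card (hCBsub W Z)
  have cardS : ∀ Z W, (RS Z W).card + (CS Z W).card = (Z ∩ XS).card := by
    intro Z W; rw [hRS]; exact Finset.card_sdiff_add_card_eq_card (hCSsub Z W)
  -- z is rejected from Y'
  have hzRB : z ∈ RB Y' Y' := by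
    rw [hRB]
    refine Finset.mem_sdiff.mpr ⟨?_, ?_⟩
    · rw [hB']; exact Finset.mem_insert_self _ _
    · rw [hCBW]; exact fun h => hzr (Finset.mem_inter.mp h).1
  have hYsub : Y ⊆ Y' := Finset.subset_insert z Y
  have hsub : RB Y Y' ⊆ RB Y' Y' := SSS_B Y Y' Y' hYsub
  have hzn : z ∉ RB Y Y' := by
    rw [hRB]
    exact fun h => hz' (Finset.mem_sdiff.mp h).1
  have hins : insert z (RB Y Y') ⊆ RB Y' Y' := Finset.insert_subset hzRB hsub
  have hcard1 : (RB Y Y').card + 1 ≤ (RB Y' Y').card := by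
    have := Finset.card_le_card hins
    rwa [Finset.card_insert_of_notMem hzn] at this
  have cardYB' : (Y' ∩ XB).card = (Y ∩ XB).card + 1 := by
    rw [hB', Finset.card_insert_of_notMem hz']
  have eqB1 := cardB Y' Y'
  have eqB2 := cardB Y Y'
  have hCBle : (CB Y' Y').card ≤ (CB Y Y').card := by omega
  have hLAD := LAD Y Y' Y' hYsub
  have hRSsub : RS Y' Y' ⊆ RS Y' Y := CSC_S Y' Y Y' hYsub
  have eqS1 := cardS Y' Y'
  have eqS2 := cardS Y' Y
  have hRScard : (RS Y' Y').card ≤ (RS Y' Y).card := Finset.card_le_card hRSsub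
  have hCSle : (CS Y' Y).card ≤ (CS Y' Y').card := by omega
  -- equalities of cardinalities
  have hCBeq : (CB Y' Y').card = (CB Y Y').card := by omega
  have hCSeqc : (CS Y' Y').card = (CS Y' Y).card := by omega
  -- RS equality
  have hRSeq : RS Y' Y' = RS Y' Y :=
    Finset.eq_of_subset_of_card_le hRSsub (by omega)
  have hCSeq : CS Y' Y' = CS Y' Y := by rw [hCSc, hCSc, hRSeq]
  -- RB equality
  have hRBeq : RB Y' Y' = insert z (RB Y Y') :=
    (Finset.eq_of_subset_of_card_le hins
      (by rw [Finset.card_insert_of_notMem hzn]; omega)).symm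
  have hsdiff : insert z (Y ∩ XB) \ insert z (RB Y Y') = (Y ∩ XB) \ RB Y Y' := by
    ext x
    simp only [Finset.mem_sdiff, Finset.mem_insert, not_or]
    constructor
    · rintro ⟨hx, hne, hR⟩
      exact ⟨hx.resolve_left hne, hR⟩
    · rintro ⟨hxA, hR⟩
      exact ⟨Or.inr hxA, fun he => hz' (he ▸ hxA), hR⟩
  have hCBeq2 : CB Y' Y' = CB Y Y' := by
    rw [hCBc, hCBc, hB', hRBeq, hsdiff]
  have hCBYY : CB Y Y' = CB Y Y := by rw [hCB, hCB, hS']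
  have hCSYY : CS Y' Y = CS Y Y := by rw [hCS, hCS, hS']
  calc C Y' = C Y' ∩ XB ∪ C Y' ∩ XS := (hsplit _).symm
    _ = CB Y' Y' ∪ CS Y' Y' := by rw [hCBW, hCSW]
    _ = CB Y Y ∪ CS Y Y := by rw [hCBeq2, hCBYY, hCSeq, hCSYY]
    _ = C Y ∩ XB ∪ C Y ∩ XS := by rw [hCBW, hCSW]
    _ = C Y := hsplit _
end

section
/- If a choice function C : 2^X → 2^X is same-side substitutable (in the sense that rejected contracts remain rejected when the offer set expands, i.e., Y ⊆ Y' implies Y \ C(Y) ⊆ Y' \ C(Y')) and satisfies the irrelevance of rejected contracts condition, then for any subsets Y, Z of X, C(Y ∪ Z) = C(Y ∪ C(Z)). -/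
/-- Substitutability and IRC imply `C(Y ∪ Z) = C(Y ∪ C(Z))`. -/
theorem choice_union_eq_choice_union_choice {X : Type*} [DecidableEq X]
    (C : Finset X → Finset X) (hC : ∀ A, C A ⊆ A)
    (subst : ∀ Y Y', Y ⊆ Y' → Y \ C Y ⊆ Y' \ C Y')
    (irc : ∀ Y Z, C Y ⊆ Z → Z ⊆ Y → C Z = C Y)
    (Y Z : Finset X) : C (Y ∪ Z) = C (Y ∪ C Z) := by
  refine (irc (Y ∪ Z) (Y ∪ C Z) ?_ ?_).symm
  · intro x hx
    have hxYZ : x ∈ Y ∪ Z := hC _ hx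
    rcases Finset.mem_union.1 hxYZ with h | h
    · exact Finset.mem_union_left _ h
    · by_cases hc : x ∈ C Z
      · exact Finset.mem_union_right _ hc
      · have := subst Z (Y ∪ Z) Finset.subset_union_right
          (Finset.mem_sdiff.2 ⟨h, hc⟩)
        exact absurd hx (Finset.mem_sdiff.1 this).2
  · exact Finset.union_subset_union_right (hC Z)
end

section
/- Terminal superiority is a partial order: given choice functions satisfying substitutability and IRC, the seller-superiority relation ⪰^S on acceptable outcomes (restricted to terminal agents' contracts) is reflexive, antisymmetric, and transitive. -/
variable {F X : Type*} [DecidableEq X] [DecidableEq F]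

/-- Contracts in `Y` involving agent `f` (as buyer or seller). -/
def Xf (b s : X → F) (f : F) (Y : Finset X) : Finset X :=
  Y.filter (fun x => b x = f ∨ s x = f)

/-- Upstream contracts of `f` in `Y`. -/
def Yb (b : X → F) (f : F) (Y : Finset X) : Finset X := Y.filter (fun x => b x = f)

/-- Downstream contracts of `f` in `Z`. -/
def Zs (s : X → F) (f : F) (Z : Finset X) : Finset X := Z.filter (fun x => s x = f)

/-- Chosen upstream contracts of `f` from upstream offers `Y` and downstream offers `Z`. -/
def CB (b s : X → F) (C : F → Finset X → Finset X) (f : F) (Y Z : Finset X) : Finset X :=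
  (C f (Yb b f Y ∪ Zs s f Z)).filter (fun x => b x = f)

/-- Chosen downstream contracts of `f` from downstream offers `Z` and upstream offers `Y`. -/
def CS (b s : X → F) (C : F → Finset X → Finset X) (f : F) (Z Y : Finset X) : Finset X :=
  (C f (Zs s f Z ∪ Yb b f Y)).filter (fun x => s x = f)

/-- Rejected upstream contracts. -/
def RB (b s : X → F) (C : F → Finset X → Finset X) (f : F) (Y Z : Finset X) : Finset X :=
  Yb b f Y \ CB b s C f Y Z

/-- Rejected downstream contracts. -/
def RS (b s : X → F) (C : F → Finset X → Finset X) (f : F) (Z Y : Finset X) : Finset X :=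
  Zs s f Z \ CS b s C f Z Y

/-- Full substitutability: same-side substitutability and cross-side complementarity. -/
def FullySubstitutable (b s : X → F) (C : F → Finset X → Finset X) : Prop :=
  (∀ (f : F) (Y' Y Z : Finset X), Y' ⊆ Y → RB b s C f Y' Z ⊆ RB b s C f Y Z) ∧
  (∀ (f : F) (Z' Z Y : Finset X), Z' ⊆ Z → RS b s C f Z' Y ⊆ RS b s C f Z Y) ∧
  (∀ (f : F) (Y Z' Z : Finset X), Z' ⊆ Z → RB b s C f Y Z ⊆ RB b s C f Y Z') ∧
  (∀ (f : F) (Z Y' Y : Finset X), Y' ⊆ Y → RS b s C f Z Y ⊆ RS b s C f Z Y')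

/-- Irrelevance of rejected contracts. -/
def IRC (C : F → Finset X → Finset X) : Prop :=
  ∀ (f : F) (Y Z : Finset X), C f Y ⊆ Z → Z ⊆ Y → C f Z = C f Y

/-- `A` is `(W,f)`-rational: `A_f ⊆ C^f(W_f ∪ A_f)`. -/
def Rational (b s : X → F) (C : F → Finset X → Finset X) (W A : Finset X) (f : F) : Prop :=
  Xf b s f A ⊆ C f (Xf b s f W ∪ Xf b s f A)

/-- `A` is acceptable (individually rational for all agents). -/
def Acceptable (b s : X → F) (C : F → Finset X → Finset X) (A : Finset X) : Prop :=
  ∀ f : F, C f (Xf b s f A) = Xf b s f A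

/-- `{y,z}` is a `(W,f)`-rational pair: jointly but not individually `(W,f)`-rational. -/
def RationalPair (b s : X → F) (C : F → Finset X → Finset X) (W : Finset X) (f : F)
    (y z : X) : Prop :=
  ¬ Rational b s C W {y} f ∧ ¬ Rational b s C W {z} f ∧ Rational b s C W {y, z} f

/-- A locally blocking trail to outcome `A`. -/
def LocallyBlockingTrail (b s : X → F) (C : F → Finset X → Finset X) (A : Finset X) : Prop :=
  ∃ (M : ℕ) (x : ℕ → X), 0 < M ∧
    (∀ i j, i < M → j < M → x i = x j → i = j) ∧
    (∀ i, i + 1 < M → b (x i) = s (x (i + 1))) ∧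
    (∀ i, i < M → x i ∉ A) ∧
    Rational b s C A {x 0} (s (x 0)) ∧
    (∀ i, 0 < i → i < M → Rational b s C A {x (i - 1), x i} (b (x (i - 1)))) ∧
    Rational b s C A {x (M - 1)} (b (x (M - 1)))

/-- A blocking trail to outcome `A` (with initial- or final-segment rationality
at intermediate agents). -/
def BlockingTrail (b s : X → F) (C : F → Finset X → Finset X) (A : Finset X) : Prop :=
  ∃ (M : ℕ) (x : ℕ → X), 0 < M ∧
    (∀ i j, i < M → j < M → x i = x j → i = j) ∧
    (∀ i, i + 1 < M → b (x i) = s (x (i + 1))) ∧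
    (∀ i, i < M → x i ∉ A) ∧
    Rational b s C A {x 0} (s (x 0)) ∧
    ((∀ i, 0 < i → i < M →
        Rational b s C A ((Finset.range (i + 1)).image x) (b (x (i - 1)))) ∨
     (∀ i, 0 < i → i < M →
        Rational b s C A ((Finset.Ico (i - 1) M).image x) (b (x (i - 1))))) ∧
    Rational b s C A {x (M - 1)} (b (x (M - 1)))

/-- Fully trail-stable outcome. -/
def FullyTrailStable (b s : X → F) (C : F → Finset X → Finset X) (A : Finset X) : Prop :=
  Acceptable b s C A ∧ ¬ LocallyBlockingTrail b s C A

/-- Trail-stable outcome. -/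
def TrailStable (b s : X → F) (C : F → Finset X → Finset X) (A : Finset X) : Prop :=
  Acceptable b s C A ∧ ¬ BlockingTrail b s C A

/-- Set-stable outcome. -/
def SetStable (b s : X → F) (C : F → Finset X → Finset X) (A : Finset X) : Prop :=
  Acceptable b s C A ∧
  ¬ ∃ Z : Finset X, Z.Nonempty ∧ Disjoint Z A ∧ ∀ f : F, Rational b s C A Z f

/-- Separable choice functions. -/
def Separable (b s : X → F) (C : F → Finset X → Finset X) : Prop :=
  ∀ (f : F) (A W : Finset X) (y z : X), b y = f → s z = f → y ∉ A → z ∉ A →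
    Rational b s C W A f → RationalPair b s C W f y z →
    Rational b s C W (A ∪ {y, z}) f

/-- Simple choice functions (with an intensity map). -/
def Simple (b s : X → F) (C : F → Finset X → Finset X) : Prop :=
  ∀ f : F, ∃ w : X → ℝ, ∀ (W A : Finset X), Acceptable b s C A →
    Rational b s C W A f →
    ∀ y ∈ A, b y = f → ∃ z ∈ A, s z = f ∧ w y > w z

/-- Aggregate upstream rejection function. -/
def RBagg [Fintype F] (b s : X → F) (C : F → Finset X → Finset X) (Y Z : Finset X) : Finset X :=
  (Finset.univ : Finset F).biUnion (fun f => RB b s C f Y Z)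

/-- Aggregate downstream rejection function. -/
def RSagg [Fintype F] (b s : X → F) (C : F → Finset X → Finset X) (Z Y : Finset X) : Finset X :=
  (Finset.univ : Finset F).biUnion (fun f => RS b s C f Z Y)


lemma sup_trans_aux {X : Type*} [DecidableEq X] (Cf : Finset X → Finset X)
    (hC : ∀ A, Cf A ⊆ A)
    (subst : ∀ Y Y', Y ⊆ Y' → Y \ Cf Y ⊆ Y' \ Cf Y')
    (irc : ∀ Y Z, Cf Y ⊆ Z → Z ⊆ Y → Cf Z = Cf Y)
    (A B D : Finset X) (h1 : Cf (A ∪ B) = A) (h2 : Cf (B ∪ D) = B) :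
    Cf (A ∪ D) = A := by
  set T : Finset X := A ∪ B ∪ D with hT
  have hABT : A ∪ B ⊆ T := Finset.subset_union_left
  have hBDT : B ∪ D ⊆ T := by
    intro x hx
    rcases Finset.mem_union.1 hx with h | h
    · exact Finset.mem_union_left _ (Finset.mem_union_right _ h)
    · exact Finset.mem_union_right _ h
  have hCT : Cf T ⊆ A := by
    intro x hx
    by_contra hxA
    rcases Finset.mem_union.1 (hC T hx) with h | hD
    · rcases Finset.mem_union.1 h with hA | hB
      · exact hxA hA
      · have : x ∈ (A ∪ B) \ Cf (A ∪ B) := by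
          rw [h1]; exact Finset.mem_sdiff.2 ⟨Finset.mem_union_right _ hB, hxA⟩
        exact (Finset.mem_sdiff.1 (subst _ _ hABT this)).2 hx
    · by_cases hB : x ∈ B
      · have : x ∈ (A ∪ B) \ Cf (A ∪ B) := by
          rw [h1]; exact Finset.mem_sdiff.2 ⟨Finset.mem_union_right _ hB, hxA⟩
        exact (Finset.mem_sdiff.1 (subst _ _ hABT this)).2 hx
      · have : x ∈ (B ∪ D) \ Cf (B ∪ D) := by
          rw [h2]; exact Finset.mem_sdiff.2 ⟨Finset.mem_union_right _ hD, hB⟩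
        exact (Finset.mem_sdiff.1 (subst _ _ hBDT this)).2 hx
  have hCTeq : Cf T = A := by
    have := irc T (A ∪ B) (hCT.trans Finset.subset_union_left) hABT
    rw [h1] at this; exact this.symm
  have hADT : A ∪ D ⊆ T := by
    intro x hx
    rcases Finset.mem_union.1 hx with h | h
    · exact Finset.mem_union_left _ (Finset.mem_union_left _ h)
    · exact Finset.mem_union_right _ h
  have := irc T (A ∪ D) (by rw [hCTeq]; exact Finset.subset_union_left) hADT
  rw [hCTeq] at this; exact this

/-- seller-superiority is a partial order on acceptable outcomes
(antisymmetry on terminal agents' contracts). -/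
theorem terminal_superiority_partialOrder (b s : X → F)
    (C : F → Finset X → Finset X)
    (hC : ∀ (f : F) (A : Finset X), C f A ⊆ A)
    (subst : ∀ (f : F) (Y Y' : Finset X), Y ⊆ Y' → Y \ C f Y ⊆ Y' \ C f Y')
    (hirc : IRC C)
    (terminalSeller terminalBuyer : F → Prop)
    (hts : ∀ f, terminalSeller f ↔ ∀ x : X, b x ≠ f)
    (htb : ∀ f, terminalBuyer f ↔ ∀ x : X, s x ≠ f)
    (sup : Finset X → Finset X → Prop)
    (hsup : ∀ A W, sup A W ↔
      ((∀ f, terminalSeller f → C f (Xf b s f A ∪ Xf b s f W) = Xf b s f A) ∧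
       (∀ g, terminalBuyer g → C g (Xf b s g A ∪ Xf b s g W) = Xf b s g W))) :
    (∀ A : Finset X, Acceptable b s C A → sup A A) ∧
    (∀ A W : Finset X, Acceptable b s C A → Acceptable b s C W →
      sup A W → sup W A → ∀ f : F, terminalSeller f ∨ terminalBuyer f →
        Xf b s f A = Xf b s f W) ∧
    (∀ A A' A'' : Finset X, Acceptable b s C A → Acceptable b s C A' →
      Acceptable b s C A'' → sup A A' → sup A' A'' → sup A A'') := by
  refine ⟨?_, ?_, ?_⟩
  · intro A hA
    rw [hsup]
    exact ⟨fun f _ => by rw [Finset.union_self]; exact hA f,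
           fun g _ => by rw [Finset.union_self]; exact hA g⟩
  · intro A W hA hW h1 h2 f hf
    rw [hsup] at h1 h2
    rcases hf with hf | hf
    · calc Xf b s f A = C f (Xf b s f A ∪ Xf b s f W) := (h1.1 f hf).symm
        _ = C f (Xf b s f W ∪ Xf b s f A) := by rw [Finset.union_comm]
        _ = Xf b s f W := h2.1 f hf
    · calc Xf b s f A = C f (Xf b s f W ∪ Xf b s f A) := (h2.2 f hf).symm
        _ = C f (Xf b s f A ∪ Xf b s f W) := by rw [Finset.union_comm]
        _ = Xf b s f W := h1.2 f hf
  · intro A A' A'' hA hA' hA'' h1 h2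
    rw [hsup] at h1 h2 ⊢
    constructor
    · intro f hf
      exact sup_trans_aux (C f) (hC f) (subst f) (hirc f) _ _ _ (h1.1 f hf) (h2.1 f hf)
    · intro g hg
      have key := sup_trans_aux (C g) (hC g) (subst g) (hirc g)
        (Xf b s g A'') (Xf b s g A') (Xf b s g A)
        (by rw [Finset.union_comm]; exact h2.2 g hg)
        (by rw [Finset.union_comm]; exact h1.2 g hg)
      rw [Finset.union_comm] at key
      exact key
end

section
/- If a firm's choice function is fully substitutable and satisfies the Laws of Aggregate Demand and Supply, then its rejection function R^f is isotone with respect to the order ⊑ (defined by (Y',Z') ⊑ (Y,Z) iff Y' ⊆ Y and Z ⊆ Z') and is a w-contraction: for every (Y',Z') ⊑ (Y,Z), w(R^f(Y,Z) ⊟ R^f(Y',Z')) ≤ w((Y,Z) ⊟ (Y',Z')). -/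
/-- under full substitutability and LAD/LAS, the rejection
function is `⊑`-isotone and a `w`-contraction. -/
theorem rejection_isotone_wContraction {B S : Type*} [Fintype S]
    [DecidableEq B] [DecidableEq S]
    (CB : Finset B → Finset S → Finset B) (CS : Finset S → Finset B → Finset S)
    (hCB : ∀ Y Z, CB Y Z ⊆ Y) (hCS : ∀ Z Y, CS Z Y ⊆ Z)
    (sssB : ∀ Y' Y Z, Y' ⊆ Y → Y' \ CB Y' Z ⊆ Y \ CB Y Z)
    (sssS : ∀ Z' Z Y, Z' ⊆ Z → Z' \ CS Z' Y ⊆ Z \ CS Z Y)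
    (cscB : ∀ Y Z' Z, Z' ⊆ Z → Y \ CB Y Z ⊆ Y \ CB Y Z')
    (cscS : ∀ Z Y' Y, Y' ⊆ Y → Z \ CS Z Y ⊆ Z \ CS Z Y')
    (ladlas : ∀ Y' Y Z Z', Y' ⊆ Y → Z ⊆ Z' →
      ((CB Y' Z').card : ℤ) - (CS Z' Y').card ≤ ((CB Y Z).card : ℤ) - (CS Z Y).card)
    (Y' Y : Finset B) (Z Z' : Finset S) (hY : Y' ⊆ Y) (hZ : Z ⊆ Z') :
    (Y' \ CB Y' Z' ⊆ Y \ CB Y Z) ∧ (Z \ CS Z Y ⊆ Z' \ CS Z' Y') ∧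
    (((Y \ CB Y Z) \ (Y' \ CB Y' Z')).card : ℤ)
        - (((Z' \ CS Z' Y') \ (Z \ CS Z Y))ᶜ).card
      ≤ ((Y \ Y').card : ℤ) - ((Z' \ Z)ᶜ).card := by
  have hB : Y' \ CB Y' Z' ⊆ Y \ CB Y Z :=
    (cscB Y' Z Z' hZ).trans (sssB Y' Y Z hY)
  have hS : Z \ CS Z Y ⊆ Z' \ CS Z' Y' :=
    (cscS Z Y' Y hY).trans (sssS Z Z' Y' hZ)
  refine ⟨hB, hS, ?_⟩
  have c1 : ((Y \ CB Y Z) \ (Y' \ CB Y' Z')).card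
      = (Y \ CB Y Z).card - (Y' \ CB Y' Z').card :=
    Finset.card_sdiff_of_subset hB
  have c2 : ((Z' \ CS Z' Y') \ (Z \ CS Z Y)).card
      = (Z' \ CS Z' Y').card - (Z \ CS Z Y).card :=
    Finset.card_sdiff_of_subset hS
  have e1 : (Y \ CB Y Z).card = Y.card - (CB Y Z).card := Finset.card_sdiff_of_subset (hCB Y Z)
  have e2 : (Y' \ CB Y' Z').card = Y'.card - (CB Y' Z').card := Finset.card_sdiff_of_subset (hCB Y' Z')
  have e3 : (Z' \ CS Z' Y').card = Z'.card - (CS Z' Y').card := Finset.card_sdiff_of_subset (hCS Z' Y')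
  have e4 : (Z \ CS Z Y).card = Z.card - (CS Z Y).card := Finset.card_sdiff_of_subset (hCS Z Y)
  have e5 : (Y \ Y').card = Y.card - Y'.card := Finset.card_sdiff_of_subset hY
  have e6 : (Z' \ Z).card = Z'.card - Z.card := Finset.card_sdiff_of_subset hZ
  have compl1 : (((Z' \ CS Z' Y') \ (Z \ CS Z Y))ᶜ : Finset S).card
      = Fintype.card S - ((Z' \ CS Z' Y') \ (Z \ CS Z Y)).card := Finset.card_compl _
  have compl2 : ((Z' \ Z)ᶜ : Finset S).card
      = Fintype.card S - (Z' \ Z).card := Finset.card_compl _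
  have lad := ladlas Y' Y Z Z' hY hZ
  have hle1 : (CB Y Z).card ≤ Y.card := Finset.card_le_card (hCB Y Z)
  have hle2 : (CB Y' Z').card ≤ Y'.card := Finset.card_le_card (hCB Y' Z')
  have hle3 : (CS Z' Y').card ≤ Z'.card := Finset.card_le_card (hCS Z' Y')
  have hle4 : (CS Z Y).card ≤ Z.card := Finset.card_le_card (hCS Z Y)
  have hle5 : (Y' \ CB Y' Z').card ≤ (Y \ CB Y Z).card := Finset.card_le_card hB
  have hle6 : (Z \ CS Z Y).card ≤ (Z' \ CS Z' Y').card := Finset.card_le_card hS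
  have hle7 : Y'.card ≤ Y.card := Finset.card_le_card hY
  have hle8 : Z.card ≤ Z'.card := Finset.card_le_card hZ
  have hle9 : ((Z' \ CS Z' Y') \ (Z \ CS Z Y)).card ≤ Fintype.card S :=
    Finset.card_le_card (Finset.subset_univ _) |>.trans_eq (Finset.card_univ)
  have hle10 : (Z' \ Z).card ≤ Fintype.card S :=
    Finset.card_le_card (Finset.subset_univ _) |>.trans_eq (Finset.card_univ)
  omega
end

section
/- If F : L → L is an isotone w-contraction on the lattice L of pairs of subsets of finite disjoint sets (ordered by (Y',Z') ⊑ (Y,Z) iff Y' ⊆ Y, Z ⊆ Z'), then the set of fixed points of F is a nonempty sublattice of L: the lattice meet and join (with respect to ⊑) of any two fixed points are fixed points. -/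
private lemma aux_card_eq {α β : Type*} (A A' : Finset α) (C C' : Finset β)
    (hA : A ⊆ A') (hC : C' ⊆ C)
    (h : (A'.card : ℤ) - C'.card ≤ (A.card : ℤ) - C.card) :
    A' = A ∧ C' = C := by
  have h1 : A.card ≤ A'.card := Finset.card_le_card hA
  have h2 : C'.card ≤ C.card := Finset.card_le_card hC
  have e1 : A'.card ≤ A.card := by omega
  have e2 : C.card ≤ C'.card := by omega
  exact ⟨(Finset.eq_of_subset_of_card_le hA e1).symm,
    Finset.eq_of_subset_of_card_le hC e2⟩

/-- the fixed points of an isotone `w`-contraction form a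
nonempty sublattice (binary meet and join of fixed points are fixed). -/
theorem fixedPoints_sublattice {B S : Type*} [Fintype B] [Fintype S]
    [DecidableEq B] [DecidableEq S]
    (Fn : Finset B × Finset S → Finset B × Finset S)
    (hiso : ∀ p q : Finset B × Finset S, p.1 ⊆ q.1 → q.2 ⊆ p.2 →
      (Fn p).1 ⊆ (Fn q).1 ∧ (Fn q).2 ⊆ (Fn p).2)
    (hw : ∀ p q : Finset B × Finset S, p.1 ⊆ q.1 → q.2 ⊆ p.2 →
      (((Fn q).1 \ (Fn p).1).card : ℤ) - (((Fn p).2 \ (Fn q).2)ᶜ).card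
        ≤ ((q.1 \ p.1).card : ℤ) - ((p.2 \ q.2)ᶜ).card) :
    (∃ p, Fn p = p) ∧
    ∀ p q : Finset B × Finset S, Fn p = p → Fn q = q →
      Fn (p.1 ∪ q.1, p.2 ∩ q.2) = (p.1 ∪ q.1, p.2 ∩ q.2) ∧
      Fn (p.1 ∩ q.1, p.2 ∪ q.2) = (p.1 ∩ q.1, p.2 ∪ q.2) := by
  constructor
  · -- existence of a fixed point
    by_contra hno
    push_neg at hno
    set bot : Finset B × Finset S := (∅, Finset.univ) with hbot
    set P : ℕ → Finset B × Finset S := fun n => Fn^[n] bot with hP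
    have hPsucc : ∀ n, P (n + 1) = Fn (P n) := by
      intro n; simp [hP, Function.iterate_succ_apply']
    have chain : ∀ n, (P n).1 ⊆ (P (n + 1)).1 ∧ (P (n + 1)).2 ⊆ (P n).2 := by
      intro n
      induction n with
      | zero =>
        constructor
        · simp [hP, hbot]
        · intro x _; simp [hP, hbot]
      | succ n ih =>
        rw [hPsucc n] at ih
        rw [hPsucc (n + 1), hPsucc n]
        exact hiso _ _ ih.1 ih.2
    set μ : Finset B × Finset S → ℕ := fun p => p.1.card + p.2ᶜ.card with hμ
    have hstrict : ∀ n, μ (P n) < μ (P (n + 1)) := by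
      intro n
      have h1 : (P n).1.card ≤ (P (n + 1)).1.card :=
        Finset.card_le_card (chain n).1
      have h2 : (P n).2ᶜ.card ≤ (P (n + 1)).2ᶜ.card :=
        Finset.card_le_card (Finset.compl_subset_compl.mpr (chain n).2)
      rcases lt_or_eq_of_le (Nat.add_le_add h1 h2) with h | h
      · exact h
      · exfalso
        have e1 : (P n).1.card = (P (n + 1)).1.card := by omega
        have e2 : (P n).2ᶜ.card = (P (n + 1)).2ᶜ.card := by omega
        have s1 : (P n).1 = (P (n + 1)).1 :=
          Finset.eq_of_subset_of_card_le (chain n).1 e1.ge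
        have s2 : (P n).2ᶜ = (P (n + 1)).2ᶜ :=
          Finset.eq_of_subset_of_card_le
            (Finset.compl_subset_compl.mpr (chain n).2) e2.ge
        have s2' : (P n).2 = (P (n + 1)).2 := by
          have := congrArg compl s2
          simpa using this
        have : Fn (P n) = P n := by
          rw [← hPsucc n]
          exact (Prod.ext s1 s2').symm
        exact hno _ this
    have hgrow : ∀ n, n ≤ μ (P n) := by
      intro n
      induction n with
      | zero => exact Nat.zero_le _
      | succ n ih => exact Nat.lt_of_le_of_lt ih (hstrict n)
    have hbound : μ (P (Fintype.card B + Fintype.card S + 1)) ≤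
        Fintype.card B + Fintype.card S :=
      Nat.add_le_add (Finset.card_le_univ _) (Finset.card_le_univ _)
    have := hgrow (Fintype.card B + Fintype.card S + 1)
    omega
  · -- closure under join and meet
    intro p q hp hq
    constructor
    · -- join
      set j : Finset B × Finset S := (p.1 ∪ q.1, p.2 ∩ q.2) with hj
      have hpj : p.1 ⊆ j.1 ∧ j.2 ⊆ p.2 :=
        ⟨Finset.subset_union_left, Finset.inter_subset_left⟩
      have hqj : q.1 ⊆ j.1 ∧ j.2 ⊆ q.2 :=
        ⟨Finset.subset_union_right, Finset.inter_subset_right⟩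
      have h1 := hiso p j hpj.1 hpj.2
      have h2 := hiso q j hqj.1 hqj.2
      rw [hp] at h1; rw [hq] at h2
      have jsub1 : j.1 ⊆ (Fn j).1 := Finset.union_subset h1.1 h2.1
      have jsub2 : (Fn j).2 ⊆ j.2 := Finset.subset_inter h1.2 h2.2
      have hwq := hw q j hqj.1 hqj.2
      rw [hq] at hwq
      obtain ⟨e1, e2⟩ := aux_card_eq (j.1 \ q.1) ((Fn j).1 \ q.1)
        ((q.2 \ j.2)ᶜ) ((q.2 \ (Fn j).2)ᶜ)
        (Finset.sdiff_subset_sdiff jsub1 (le_refl _))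
        (Finset.compl_subset_compl.mpr
          (Finset.sdiff_subset_sdiff (le_refl _) jsub2)) hwq
      have e2' : q.2 \ (Fn j).2 = q.2 \ j.2 := by
        have := congrArg compl e2
        simpa using this
      have f1 : (Fn j).1 = j.1 := by
        apply Finset.Subset.antisymm _ jsub1
        intro x hx
        by_cases hxq : x ∈ q.1
        · exact hqj.1 hxq
        · have : x ∈ j.1 \ q.1 := e1 ▸ Finset.mem_sdiff.mpr ⟨hx, hxq⟩
          exact (Finset.mem_sdiff.mp this).1
      have f2 : (Fn j).2 = j.2 := by
        apply Finset.Subset.antisymm jsub2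
        intro x hx
        have hxq : x ∈ q.2 := hqj.2 hx
        by_contra hxn
        have : x ∈ q.2 \ j.2 := e2' ▸ Finset.mem_sdiff.mpr ⟨hxq, hxn⟩
        exact (Finset.mem_sdiff.mp this).2 hx
      exact Prod.ext f1 f2
    · -- meet
      set m : Finset B × Finset S := (p.1 ∩ q.1, p.2 ∪ q.2) with hm
      have hmp : m.1 ⊆ p.1 ∧ p.2 ⊆ m.2 :=
        ⟨Finset.inter_subset_left, Finset.subset_union_left⟩
      have hmq : m.1 ⊆ q.1 ∧ q.2 ⊆ m.2 :=
        ⟨Finset.inter_subset_right, Finset.subset_union_right⟩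
      have h1 := hiso m p hmp.1 hmp.2
      have h2 := hiso m q hmq.1 hmq.2
      rw [hp] at h1; rw [hq] at h2
      have msub1 : (Fn m).1 ⊆ m.1 := Finset.subset_inter h1.1 h2.1
      have msub2 : m.2 ⊆ (Fn m).2 := Finset.union_subset h1.2 h2.2
      have hwq := hw m q hmq.1 hmq.2
      rw [hq] at hwq
      obtain ⟨e1, e2⟩ := aux_card_eq (q.1 \ m.1) (q.1 \ (Fn m).1)
        ((m.2 \ q.2)ᶜ) (((Fn m).2 \ q.2)ᶜ)
        (Finset.sdiff_subset_sdiff (le_refl _) msub1)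
        (Finset.compl_subset_compl.mpr
          (Finset.sdiff_subset_sdiff msub2 (le_refl _))) hwq
      have e2' : (Fn m).2 \ q.2 = m.2 \ q.2 := by
        have := congrArg compl e2
        simpa using this
      have f1 : (Fn m).1 = m.1 := by
        apply Finset.Subset.antisymm msub1
        intro x hx
        have hxq : x ∈ q.1 := hmq.1 hx
        by_contra hxn
        have : x ∈ q.1 \ m.1 := by
          rw [← e1]; exact Finset.mem_sdiff.mpr ⟨hxq, hxn⟩
        exact (Finset.mem_sdiff.mp this).2 hx
      have f2 : (Fn m).2 = m.2 := by
        apply Finset.Subset.antisymm _ msub2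
        intro x hx
        by_cases hxq : x ∈ q.2
        · exact hmq.2 hxq
        · have : x ∈ m.2 \ q.2 := e2' ▸ Finset.mem_sdiff.mpr ⟨hx, hxq⟩
          exact (Finset.mem_sdiff.mp this).1
      exact Prod.ext f1 f2
end

section
/- If L is a nonempty complete sublattice of the lattice of pairs of subsets of X (with operations join = (union, intersection) and meet = (intersection, union) componentwise as in ⊑), and T is a subset of X (the terminal contracts), then the projection L_T = { (Y ∩ T, Z ∩ T) : (Y,Z) ∈ L } is a lattice under the induced order ⊑. -/
/-- the projection of a nonempty complete sublattice of pairs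
to terminal contracts `T` is a lattice under the induced order `⊑`. -/
theorem projection_is_lattice {X : Type*} [Fintype X] [DecidableEq X]
    (L : Set (Finset X × Finset X)) (hne : L.Nonempty)
    (hsup : ∀ S ⊆ L, S.Nonempty → ∃ p ∈ L,
      (∀ x, x ∈ p.1 ↔ ∃ q ∈ S, x ∈ q.1) ∧ (∀ x, x ∈ p.2 ↔ ∀ q ∈ S, x ∈ q.2))
    (hinf : ∀ S ⊆ L, S.Nonempty → ∃ p ∈ L,
      (∀ x, x ∈ p.1 ↔ ∀ q ∈ S, x ∈ q.1) ∧ (∀ x, x ∈ p.2 ↔ ∃ q ∈ S, x ∈ q.2))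
    (T : Finset X) :
    ∀ a ∈ L, ∀ b ∈ L,
      (∃ m ∈ L, (m.1 ∩ T ⊆ a.1 ∩ T ∧ a.2 ∩ T ⊆ m.2 ∩ T) ∧
        (m.1 ∩ T ⊆ b.1 ∩ T ∧ b.2 ∩ T ⊆ m.2 ∩ T) ∧
        ∀ c ∈ L, (c.1 ∩ T ⊆ a.1 ∩ T ∧ a.2 ∩ T ⊆ c.2 ∩ T) →
          (c.1 ∩ T ⊆ b.1 ∩ T ∧ b.2 ∩ T ⊆ c.2 ∩ T) →
          (c.1 ∩ T ⊆ m.1 ∩ T ∧ m.2 ∩ T ⊆ c.2 ∩ T)) ∧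
      (∃ j ∈ L, (a.1 ∩ T ⊆ j.1 ∩ T ∧ j.2 ∩ T ⊆ a.2 ∩ T) ∧
        (b.1 ∩ T ⊆ j.1 ∩ T ∧ j.2 ∩ T ⊆ b.2 ∩ T) ∧
        ∀ c ∈ L, (a.1 ∩ T ⊆ c.1 ∩ T ∧ c.2 ∩ T ⊆ a.2 ∩ T) →
          (b.1 ∩ T ⊆ c.1 ∩ T ∧ c.2 ∩ T ⊆ b.2 ∩ T) →
          (j.1 ∩ T ⊆ c.1 ∩ T ∧ c.2 ∩ T ⊆ j.2 ∩ T)) := by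
  intro a ha b hb
  constructor
  · -- greatest lower bound: sup of all common T-lower bounds
    set S : Set (Finset X × Finset X) :=
      {c ∈ L | (c.1 ∩ T ⊆ a.1 ∩ T ∧ a.2 ∩ T ⊆ c.2 ∩ T) ∧
               (c.1 ∩ T ⊆ b.1 ∩ T ∧ b.2 ∩ T ⊆ c.2 ∩ T)} with hS
    have hSL : S ⊆ L := fun c hc => hc.1
    -- inf of {a,b} lies in S
    obtain ⟨p, hpL, hp1, hp2⟩ := hinf {a, b}
      (by intro q hq; rcases hq with h | h <;> simp_all) ⟨a, Or.inl rfl⟩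
    have hpS : p ∈ S := by
      refine ⟨hpL, ⟨?_, ?_⟩, ?_, ?_⟩
      · intro x hx
        rw [Finset.mem_inter] at hx ⊢
        exact ⟨(hp1 x).1 hx.1 a (Or.inl rfl), hx.2⟩
      · intro x hx
        rw [Finset.mem_inter] at hx ⊢
        exact ⟨(hp2 x).2 ⟨a, Or.inl rfl, hx.1⟩, hx.2⟩
      · intro x hx
        rw [Finset.mem_inter] at hx ⊢
        exact ⟨(hp1 x).1 hx.1 b (Or.inr rfl), hx.2⟩
      · intro x hx
        rw [Finset.mem_inter] at hx ⊢
        exact ⟨(hp2 x).2 ⟨b, Or.inr rfl, hx.1⟩, hx.2⟩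
    obtain ⟨m, hmL, hm1, hm2⟩ := hsup S hSL ⟨p, hpS⟩
    refine ⟨m, hmL, ⟨?_, ?_⟩, ⟨?_, ?_⟩, ?_⟩
    · intro x hx
      rw [Finset.mem_inter] at hx
      obtain ⟨q, hqS, hxq⟩ := (hm1 x).1 hx.1
      exact hqS.2.1.1 (Finset.mem_inter.mpr ⟨hxq, hx.2⟩)
    · intro x hx
      rw [Finset.mem_inter] at hx ⊢
      refine ⟨(hm2 x).2 fun q hqS => ?_, hx.2⟩
      exact (Finset.mem_inter.mp (hqS.2.1.2 (Finset.mem_inter.mpr hx))).1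
    · intro x hx
      rw [Finset.mem_inter] at hx
      obtain ⟨q, hqS, hxq⟩ := (hm1 x).1 hx.1
      exact hqS.2.2.1 (Finset.mem_inter.mpr ⟨hxq, hx.2⟩)
    · intro x hx
      rw [Finset.mem_inter] at hx ⊢
      refine ⟨(hm2 x).2 fun q hqS => ?_, hx.2⟩
      exact (Finset.mem_inter.mp (hqS.2.2.2 (Finset.mem_inter.mpr hx))).1
    · intro c hcL h1 h2
      have hcS : c ∈ S := ⟨hcL, h1, h2⟩
      constructor
      · intro x hx
        rw [Finset.mem_inter] at hx ⊢
        exact ⟨(hm1 x).2 ⟨c, hcS, hx.1⟩, hx.2⟩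
      · intro x hx
        rw [Finset.mem_inter] at hx ⊢
        exact ⟨(hm2 x).1 hx.1 c hcS, hx.2⟩
  · -- least upper bound: inf of all common T-upper bounds
    set S : Set (Finset X × Finset X) :=
      {c ∈ L | (a.1 ∩ T ⊆ c.1 ∩ T ∧ c.2 ∩ T ⊆ a.2 ∩ T) ∧
               (b.1 ∩ T ⊆ c.1 ∩ T ∧ c.2 ∩ T ⊆ b.2 ∩ T)} with hS
    have hSL : S ⊆ L := fun c hc => hc.1
    obtain ⟨p, hpL, hp1, hp2⟩ := hsup {a, b}
      (by intro q hq; rcases hq with h | h <;> simp_all) ⟨a, Or.inl rfl⟩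
    have hpS : p ∈ S := by
      refine ⟨hpL, ⟨?_, ?_⟩, ?_, ?_⟩
      · intro x hx
        rw [Finset.mem_inter] at hx ⊢
        exact ⟨(hp1 x).2 ⟨a, Or.inl rfl, hx.1⟩, hx.2⟩
      · intro x hx
        rw [Finset.mem_inter] at hx ⊢
        exact ⟨(hp2 x).1 hx.1 a (Or.inl rfl), hx.2⟩
      · intro x hx
        rw [Finset.mem_inter] at hx ⊢
        exact ⟨(hp1 x).2 ⟨b, Or.inr rfl, hx.1⟩, hx.2⟩
      · intro x hx
        rw [Finset.mem_inter] at hx ⊢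
        exact ⟨(hp2 x).1 hx.1 b (Or.inr rfl), hx.2⟩
    obtain ⟨j, hjL, hj1, hj2⟩ := hinf S hSL ⟨p, hpS⟩
    refine ⟨j, hjL, ⟨?_, ?_⟩, ⟨?_, ?_⟩, ?_⟩
    · intro x hx
      rw [Finset.mem_inter] at hx ⊢
      refine ⟨(hj1 x).2 fun q hqS => ?_, hx.2⟩
      exact (Finset.mem_inter.mp (hqS.2.1.1 (Finset.mem_inter.mpr hx))).1
    · intro x hx
      rw [Finset.mem_inter] at hx
      obtain ⟨q, hqS, hxq⟩ := (hj2 x).1 hx.1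
      exact hqS.2.1.2 (Finset.mem_inter.mpr ⟨hxq, hx.2⟩)
    · intro x hx
      rw [Finset.mem_inter] at hx ⊢
      refine ⟨(hj1 x).2 fun q hqS => ?_, hx.2⟩
      exact (Finset.mem_inter.mp (hqS.2.2.1 (Finset.mem_inter.mpr hx))).1
    · intro x hx
      rw [Finset.mem_inter] at hx
      obtain ⟨q, hqS, hxq⟩ := (hj2 x).1 hx.1
      exact hqS.2.2.2 (Finset.mem_inter.mpr ⟨hxq, hx.2⟩)
    · intro c hcL h1 h2
      have hcS : c ∈ S := ⟨hcL, h1, h2⟩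
      constructor
      · intro x hx
        rw [Finset.mem_inter] at hx ⊢
        exact ⟨(hj1 x).1 hx.1 c hcS, hx.2⟩
      · intro x hx
        rw [Finset.mem_inter] at hx ⊢
        exact ⟨(hj2 x).2 ⟨c, hcS, hx.1⟩, hx.2⟩
end

section
/- Every fixed point (X^B, X^S) of the operator Φ(Y^B, Z^S) = (X \ R_S(Z^S|Y^B), X \ R_B(Y^B|Z^S)) satisfies X^B ∪ X^S = X, and the outcome A = X^B ∩ X^S is individually rational, i.e., C^f(A_f) = A_f for every firm f. -/
variable {F X : Type*} [DecidableEq X] [DecidableEq F]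

/-- every fixed point `(XB, XS)` of `Φ` satisfies
`XB ∪ XS = X` and the outcome `XB ∩ XS` is individually rational. -/
theorem fixedPoint_union_and_individually_rational [Fintype X] [Fintype F]
    (b s : X → F) (C : F → Finset X → Finset X)
    (hC : ∀ (f : F) (A : Finset X), C f A ⊆ A)
    (hfs : FullySubstitutable b s C) (hirc : IRC C)
    (XB XS : Finset X)
    (hfix : (Finset.univ \ RSagg b s C XS XB, Finset.univ \ RBagg b s C XB XS)
      = (XB, XS)) :
    XB ∪ XS = Finset.univ ∧ Acceptable b s C (XB ∩ XS) := by
  have hB : Finset.univ \ RSagg b s C XS XB = XB := congrArg Prod.fst hfix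
  have hS : Finset.univ \ RBagg b s C XB XS = XS := congrArg Prod.snd hfix
  have memRS : ∀ x : X, x ∈ RSagg b s C XS XB ↔
      (x ∈ XS ∧ x ∉ C (s x) (Zs s (s x) XS ∪ Yb b (s x) XB)) := by
    intro x
    simp only [RSagg, Finset.mem_biUnion, Finset.mem_univ, true_and, RS, Finset.mem_sdiff,
      CS, Zs, Finset.mem_filter]
    constructor
    · rintro ⟨f, ⟨hxs, hf⟩, hn⟩
      subst hf
      exact ⟨hxs, fun hc => hn ⟨hc, rfl⟩⟩
    · rintro ⟨hxs, hn⟩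
      exact ⟨s x, ⟨hxs, rfl⟩, fun h => hn h.1⟩
  have memRB : ∀ x : X, x ∈ RBagg b s C XB XS ↔
      (x ∈ XB ∧ x ∉ C (b x) (Yb b (b x) XB ∪ Zs s (b x) XS)) := by
    intro x
    simp only [RBagg, Finset.mem_biUnion, Finset.mem_univ, true_and, RB, Finset.mem_sdiff,
      CB, Yb, Finset.mem_filter]
    constructor
    · rintro ⟨f, ⟨hxb, hf⟩, hn⟩
      subst hf
      exact ⟨hxb, fun hc => hn ⟨hc, rfl⟩⟩
    · rintro ⟨hxb, hn⟩
      exact ⟨b x, ⟨hxb, rfl⟩, fun h => hn h.1⟩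
  have hxB : ∀ x : X, x ∈ XB ↔
      ¬(x ∈ XS ∧ x ∉ C (s x) (Zs s (s x) XS ∪ Yb b (s x) XB)) := by
    intro x
    have h1 : x ∈ XB ↔ x ∉ RSagg b s C XS XB := by
      conv_lhs => rw [← hB]
      simp
    rw [h1, memRS]
  have hxS : ∀ x : X, x ∈ XS ↔
      ¬(x ∈ XB ∧ x ∉ C (b x) (Yb b (b x) XB ∪ Zs s (b x) XS)) := by
    intro x
    have h1 : x ∈ XS ↔ x ∉ RBagg b s C XB XS := by
      conv_lhs => rw [← hS]
      simp
    rw [h1, memRB]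
  constructor
  · ext x
    simp only [Finset.mem_union, Finset.mem_univ, iff_true]
    by_cases hx : x ∈ XB
    · exact Or.inl hx
    · refine Or.inr ?_
      rcases not_not.mp (fun h => hx ((hxB x).mpr h)) with ⟨hxs, _⟩
      exact hxs
  · intro f
    have hkey : Xf b s f (XB ∩ XS) = C f (Yb b f XB ∪ Zs s f XS) := by
      ext x
      simp only [Xf, Finset.mem_filter, Finset.mem_inter]
      constructor
      · rintro ⟨⟨hxb, hxs⟩, hbs⟩
        rcases hbs with hb | hs
        · have := (hxS x).mp hxs
          subst hb
          rcases not_not.mp (fun h => this ⟨hxb, h⟩) with h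
          exact not_not.mp (fun h => this ⟨hxb, h⟩)
        · have := (hxB x).mp hxb
          subst hs
          have hc : x ∈ C (s x) (Zs s (s x) XS ∪ Yb b (s x) XB) :=
            not_not.mp (fun h => this ⟨hxs, h⟩)
          rwa [Finset.union_comm] at hc
      · intro hx
        have hxW := hC f _ hx
        rw [Finset.mem_union] at hxW
        rcases hxW with hxW | hxW
        · simp only [Yb, Finset.mem_filter] at hxW
          obtain ⟨hxb, hb⟩ := hxW
          subst hb
          have hxs : x ∈ XS := (hxS x).mpr (fun h => h.2 hx)
          exact ⟨⟨hxb, hxs⟩, Or.inl rfl⟩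
        · simp only [Zs, Finset.mem_filter] at hxW
          obtain ⟨hxs, hs⟩ := hxW
          subst hs
          rw [Finset.union_comm] at hx
          have hxb : x ∈ XB := (hxB x).mpr (fun h => h.2 hx)
          exact ⟨⟨hxb, hxs⟩, Or.inr rfl⟩
    rw [hkey]
    exact hirc f _ _ (subset_refl _) (hC f _)
end

section
/- The operator Φ(Y^B, Z^S) = (X \ R_S(Z^S|Y^B), X \ R_B(Y^B|Z^S)) is isotone on the complete lattice of pairs of subsets of X ordered by (Y,Z) ⊑ (Y',Z') iff Y ⊆ Y' and Z ⊇ Z', whenever all firms' choice functions are fully substitutable; consequently Φ has a fixed point. -/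
variable {F X : Type*} [DecidableEq X] [DecidableEq F]

/-- under full substitutability, the operator
`Φ(Y,Z) = (X \ R_S(Z|Y), X \ R_B(Y|Z))` is isotone for `⊑`, hence has a
fixed point. -/
theorem phi_isotone_and_fixedPoint_exists [Fintype X] [Fintype F]
    (b s : X → F) (C : F → Finset X → Finset X)
    (hC : ∀ (f : F) (A : Finset X), C f A ⊆ A)
    (hfs : FullySubstitutable b s C) :
    (∀ Y Z Y' Z' : Finset X, Y ⊆ Y' → Z' ⊆ Z →
      (Finset.univ \ RSagg b s C Z Y) ⊆ (Finset.univ \ RSagg b s C Z' Y') ∧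
      (Finset.univ \ RBagg b s C Y' Z') ⊆ (Finset.univ \ RBagg b s C Y Z)) ∧
    ∃ XB XS : Finset X,
      Finset.univ \ RSagg b s C XS XB = XB ∧
      Finset.univ \ RBagg b s C XB XS = XS := by
  have h1 : ∀ Y Z Y' Z' : Finset X, Y ⊆ Y' → Z' ⊆ Z →
      RSagg b s C Z' Y' ⊆ RSagg b s C Z Y := by
    intro Y Z Y' Z' hY hZ x hx
    simp only [RSagg, Finset.mem_biUnion] at hx ⊢
    obtain ⟨f, -, hx⟩ := hx
    exact ⟨f, Finset.mem_univ f,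
      hfs.2.2.2 f Z Y Y' hY (hfs.2.1 f Z' Z Y' hZ hx)⟩
  have h2 : ∀ Y Z Y' Z' : Finset X, Y ⊆ Y' → Z' ⊆ Z →
      RBagg b s C Y Z ⊆ RBagg b s C Y' Z' := by
    intro Y Z Y' Z' hY hZ x hx
    simp only [RBagg, Finset.mem_biUnion] at hx ⊢
    obtain ⟨f, -, hx⟩ := hx
    exact ⟨f, Finset.mem_univ f,
      hfs.2.2.1 f Y' Z' Z hZ (hfs.1 f Y Y' Z hY hx)⟩
  refine ⟨fun Y Z Y' Z' hY hZ =>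
    ⟨Finset.sdiff_subset_sdiff le_rfl (h1 Y Z Y' Z' hY hZ),
     Finset.sdiff_subset_sdiff le_rfl (h2 Y Z Y' Z' hY hZ)⟩, ?_⟩
  letI : CompleteLattice (Finset X) := Fintype.toCompleteLattice (Finset X)
  let φ : Finset X × (Finset X)ᵒᵈ →o Finset X × (Finset X)ᵒᵈ :=
    ⟨fun p => (Finset.univ \ RSagg b s C (OrderDual.ofDual p.2) p.1,
               OrderDual.toDual (Finset.univ \ RBagg b s C p.1 (OrderDual.ofDual p.2))),
     by
      rintro ⟨Y, Z⟩ ⟨Y', Z'⟩ ⟨hY, hZ⟩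
      exact ⟨Finset.sdiff_subset_sdiff le_rfl (h1 Y (OrderDual.ofDual Z) Y'
              (OrderDual.ofDual Z') hY hZ),
             Finset.sdiff_subset_sdiff le_rfl (h2 Y (OrderDual.ofDual Z) Y'
              (OrderDual.ofDual Z') hY hZ)⟩⟩
  have hfix : φ φ.lfp = φ.lfp := φ.map_lfp
  refine ⟨φ.lfp.1, OrderDual.ofDual φ.lfp.2, ?_, ?_⟩
  · exact congrArg Prod.fst hfix
  · exact congrArg (fun p => OrderDual.ofDual (Prod.snd p)) hfix
end

section
/- In any contract network with fully substitutable choice functions satisfying IRC, there exists a fully trail-stable outcome. -/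
variable {F X : Type*} [DecidableEq X] [DecidableEq F]

section FTSAux

variable {F X : Type*} [DecidableEq X] [DecidableEq F]

lemma fts_mem_Yb {b : X → F} {f : F} {Y : Finset X} {x : X} :
    x ∈ Yb b f Y ↔ x ∈ Y ∧ b x = f := Finset.mem_filter

lemma fts_mem_Zs {s : X → F} {f : F} {Z : Finset X} {x : X} :
    x ∈ Zs s f Z ↔ x ∈ Z ∧ s x = f := Finset.mem_filter

lemma fts_mem_Xf {b s : X → F} {f : F} {Y : Finset X} {x : X} :
    x ∈ Xf b s f Y ↔ x ∈ Y ∧ (b x = f ∨ s x = f) := Finset.mem_filter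

/-- The fixed-point pair exists. -/
lemma fts_exists_fixed [Fintype X] (b s : X → F) (C : F → Finset X → Finset X)
    (hfs : FullySubstitutable b s C) :
    ∃ Y Z : Finset X,
      (∀ x : X, x ∈ Y ↔ x ∉ RS b s C (s x) Z Y) ∧
      (∀ x : X, x ∈ Z ↔ x ∉ RB b s C (b x) Y Z) := by
  classical
  obtain ⟨h1, h2, h3, h4⟩ := hfs
  set Ynext : Finset X → Finset X → Finset X :=
    fun Y Z => Finset.univ.filter (fun x => x ∉ RS b s C (s x) Z Y) with hYnext
  set Znext : Finset X → Finset X → Finset X :=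
    fun Y Z => Finset.univ.filter (fun x => x ∉ RB b s C (b x) Y Z) with hZnext
  have mono : ∀ Y Y' Z Z' : Finset X, Y ⊆ Y' → Z' ⊆ Z →
      Ynext Y Z ⊆ Ynext Y' Z' ∧ Znext Y' Z' ⊆ Znext Y Z := by
    intro Y Y' Z Z' hYY hZZ
    constructor
    · intro x hx
      rw [hYnext] at hx ⊢
      simp only [Finset.mem_filter, Finset.mem_univ, true_and] at hx ⊢
      intro hmem
      exact hx (h4 (s x) Z Y Y' hYY (h2 (s x) Z' Z Y' hZZ hmem))
    · intro x hx
      rw [hZnext] at hx ⊢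
      simp only [Finset.mem_filter, Finset.mem_univ, true_and] at hx ⊢
      intro hmem
      exact hx (h3 (b x) Y' Z' Z hZZ (h1 (b x) Y Y' Z hYY hmem))
  -- iterate
  set step : Finset X × Finset X → Finset X × Finset X :=
    fun p => (Ynext p.1 p.2, Znext p.1 p.2) with hstep
  set g : ℕ → Finset X × Finset X :=
    fun n => step^[n] (∅, (Finset.univ : Finset X)) with hg
  have gsucc : ∀ n, g (n + 1) = step (g n) := by
    intro n
    simp only [hg, Function.iterate_succ_apply']
  have gstep : ∀ n, (g n).1 ⊆ (g (n + 1)).1 ∧ (g (n + 1)).2 ⊆ (g n).2 := by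
    intro n
    induction n with
    | zero =>
      rw [gsucc]
      exact ⟨Finset.empty_subset _, Finset.subset_univ _⟩
    | succ n ih =>
      rw [gsucc (n + 1), gsucc n]
      rw [gsucc n] at ih
      exact mono _ _ _ _ ih.1 ih.2
  -- find a stabilization point
  set m : ℕ → ℕ :=
    fun n => (g n).1.card + ((Finset.univ : Finset X).card - (g n).2.card) with hm
  have mmono : ∀ n, m n ≤ m (n + 1) := by
    intro n
    have c1 := Finset.card_le_card (gstep n).1
    have c2 := Finset.card_le_card (gstep n).2
    have := Finset.card_le_card ((g n).2.subset_univ)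
    simp only [hm]
    omega
  have mbound : ∀ n, m n ≤ 2 * (Finset.univ : Finset X).card := by
    intro n
    have c1 := Finset.card_le_card ((g n).1.subset_univ)
    simp only [hm]
    omega
  have : ∃ k, m k = m (k + 1) := by
    by_contra hcon
    push_neg at hcon
    have hsm : StrictMono m := strictMono_nat_of_lt_succ
      (fun n => lt_of_le_of_ne (mmono n) (hcon n))
    have h5 : 2 * (Finset.univ : Finset X).card + 1 ≤ m (2 * (Finset.univ : Finset X).card + 1) :=
      hsm.le_apply
    have h6 := mbound (2 * (Finset.univ : Finset X).card + 1)
    omega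
  obtain ⟨k, hk⟩ := this
  have c1 := Finset.card_le_card (gstep k).1
  have c2 := Finset.card_le_card (gstep k).2
  have cu := Finset.card_le_card ((g k).2.subset_univ)
  have cu2 := Finset.card_le_card ((g (k+1)).2.subset_univ)
  have e1 : (g (k+1)).1 = (g k).1 :=
    (Finset.eq_of_subset_of_card_le (gstep k).1 (by simp only [hm] at hk; omega)).symm
  have e2 : (g (k+1)).2 = (g k).2 :=
    Finset.eq_of_subset_of_card_le (gstep k).2 (by simp only [hm] at hk; omega)
  refine ⟨(g k).1, (g k).2, ?_, ?_⟩
  · intro x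
    have e1' : Ynext (g k).1 (g k).2 = (g k).1 := ((congrArg Prod.fst (gsucc k)).symm).trans e1
    conv_lhs => rw [← e1']
    simp only [hYnext, Finset.mem_filter, Finset.mem_univ, true_and]
  · intro x
    have e2' : Znext (g k).1 (g k).2 = (g k).2 := ((congrArg Prod.snd (gsucc k)).symm).trans e2
    conv_lhs => rw [← e2']
    simp only [hZnext, Finset.mem_filter, Finset.mem_univ, true_and]

end FTSAux
section FTSMain

variable {F X : Type*} [DecidableEq X] [DecidableEq F]
variable {b s : X → F} {C : F → Finset X → Finset X} {Y Z : Finset X}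

lemma fts_choice_eq (hC : ∀ (f : F) (A : Finset X), C f A ⊆ A)
    (hY : ∀ x : X, x ∈ Y ↔ x ∉ RS b s C (s x) Z Y)
    (hZ : ∀ x : X, x ∈ Z ↔ x ∉ RB b s C (b x) Y Z) (f : F) :
    C f (Yb b f Y ∪ Zs s f Z) = Xf b s f (Y ∩ Z) := by
  ext x
  constructor
  · intro h
    have hx := hC f _ h
    rw [Finset.mem_union] at hx
    rw [fts_mem_Xf, Finset.mem_inter]
    rcases hx with hb | hs
    · obtain ⟨hxY, hbf⟩ := fts_mem_Yb.mp hb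
      refine ⟨⟨hxY, ?_⟩, Or.inl hbf⟩
      rw [hZ, hbf]
      intro hr
      rw [RB, Finset.mem_sdiff] at hr
      exact hr.2 (Finset.mem_filter.mpr ⟨h, hbf⟩)
    · obtain ⟨hxZ, hsf⟩ := fts_mem_Zs.mp hs
      refine ⟨⟨?_, hxZ⟩, Or.inr hsf⟩
      rw [hY, hsf]
      intro hr
      rw [RS, Finset.mem_sdiff] at hr
      refine hr.2 (Finset.mem_filter.mpr ⟨?_, hsf⟩)
      rw [Finset.union_comm]
      exact h
  · intro h
    rw [fts_mem_Xf, Finset.mem_inter] at h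
    obtain ⟨⟨hxY, hxZ⟩, hbs⟩ := h
    rcases hbs with hbf | hsf
    · have hh := (hZ x).mp hxZ
      rw [hbf, RB, Finset.mem_sdiff] at hh
      push_neg at hh
      have hcb := hh (Finset.mem_filter.mpr ⟨hxY, hbf⟩)
      exact (Finset.mem_filter.mp hcb).1
    · have hh := (hY x).mp hxY
      rw [hsf, RS, Finset.mem_sdiff] at hh
      push_neg at hh
      have hcs := hh (Finset.mem_filter.mpr ⟨hxZ, hsf⟩)
      have hc := (Finset.mem_filter.mp hcs).1
      rw [Finset.union_comm] at hc
      exact hc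

lemma fts_XfA_subset (hC : ∀ (f : F) (A : Finset X), C f A ⊆ A)
    (hY : ∀ x : X, x ∈ Y ↔ x ∉ RS b s C (s x) Z Y)
    (hZ : ∀ x : X, x ∈ Z ↔ x ∉ RB b s C (b x) Y Z) (f : F) :
    Xf b s f (Y ∩ Z) ⊆ Yb b f Y ∪ Zs s f Z := by
  rw [← fts_choice_eq hC hY hZ f]
  exact hC f _

lemma fts_acceptable (hC : ∀ (f : F) (A : Finset X), C f A ⊆ A) (hirc : IRC C)
    (hY : ∀ x : X, x ∈ Y ↔ x ∉ RS b s C (s x) Z Y)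
    (hZ : ∀ x : X, x ∈ Z ↔ x ∉ RB b s C (b x) Y Z) :
    Acceptable b s C (Y ∩ Z) := by
  intro f
  have key := fts_choice_eq hC hY hZ f
  have h1 : C f (Yb b f Y ∪ Zs s f Z) ⊆ Xf b s f (Y ∩ Z) := key.le
  have h2 : Xf b s f (Y ∩ Z) ⊆ Yb b f Y ∪ Zs s f Z := fts_XfA_subset hC hY hZ f
  rw [hirc f _ _ h1 h2, key]

/-- Claim 1: seller-rational contracts lie in `Y`. -/
lemma fts_claim1 (hC : ∀ (f : F) (A : Finset X), C f A ⊆ A) (hirc : IRC C)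
    (hY : ∀ x : X, x ∈ Y ↔ x ∉ RS b s C (s x) Z Y)
    (hZ : ∀ x : X, x ∈ Z ↔ x ∉ RB b s C (b x) Y Z) {x : X}
    (hx : x ∈ C (s x) (Xf b s (s x) (Y ∩ Z) ∪ {x})) : x ∈ Y := by
  by_contra hxY
  have hr : x ∈ RS b s C (s x) Z Y := by
    by_contra h; exact hxY ((hY x).mpr h)
  rw [RS, Finset.mem_sdiff] at hr
  obtain ⟨hzs, _⟩ := hr
  have hxZ : x ∈ Z := (fts_mem_Zs.mp hzs).1
  set f := s x with hf
  set A := Y ∩ Z with hA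
  have key := fts_choice_eq hC hY hZ f
  have hsub1 : C f (Yb b f Y ∪ Zs s f Z) ⊆ Zs s f Z ∪ Yb b f (Xf b s f A) := by
    rw [key]
    intro w hw
    obtain ⟨hwA, hbs⟩ := fts_mem_Xf.mp hw
    rcases hbs with hbf | hsf
    · exact Finset.mem_union_right _ (fts_mem_Yb.mpr ⟨hw, hbf⟩)
    · exact Finset.mem_union_left _
        (fts_mem_Zs.mpr ⟨(Finset.mem_inter.mp hwA).2, hsf⟩)
  have hsub2 : Zs s f Z ∪ Yb b f (Xf b s f A) ⊆ Yb b f Y ∪ Zs s f Z := by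
    intro w hw
    rcases Finset.mem_union.mp hw with hws | hwb
    · exact Finset.mem_union_right _ hws
    · obtain ⟨hwX, hbf⟩ := fts_mem_Yb.mp hwb
      exact Finset.mem_union_left _
        (fts_mem_Yb.mpr ⟨(Finset.mem_inter.mp (fts_mem_Xf.mp hwX).1).1, hbf⟩)
  have hbig : C f (Zs s f Z ∪ Yb b f (Xf b s f A)) = Xf b s f A := by
    rw [hirc f _ _ hsub1 hsub2, key]
  have hsub3 : C f (Zs s f Z ∪ Yb b f (Xf b s f A)) ⊆ Xf b s f A ∪ {x} := by
    rw [hbig]; exact Finset.subset_union_left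
  have hsub4 : Xf b s f A ∪ {x} ⊆ Zs s f Z ∪ Yb b f (Xf b s f A) := by
    intro w hw
    rcases Finset.mem_union.mp hw with hwX | hwx
    · refine (key ▸ hsub1) hwX
    · rw [Finset.mem_singleton] at hwx
      subst hwx
      exact Finset.mem_union_left _ hzs
  have hsmall : C f (Xf b s f A ∪ {x}) = Xf b s f A := by
    rw [hirc f _ _ hsub3 hsub4, hbig]
  rw [hsmall] at hx
  exact hxY (Finset.mem_inter.mp (fts_mem_Xf.mp hx).1).1

/-- Claim 2: buyer-rational contracts lie in `Z`. -/
lemma fts_claim2 (hC : ∀ (f : F) (A : Finset X), C f A ⊆ A) (hirc : IRC C)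
    (hY : ∀ x : X, x ∈ Y ↔ x ∉ RS b s C (s x) Z Y)
    (hZ : ∀ x : X, x ∈ Z ↔ x ∉ RB b s C (b x) Y Z) {x : X}
    (hx : x ∈ C (b x) (Xf b s (b x) (Y ∩ Z) ∪ {x})) : x ∈ Z := by
  by_contra hxZ
  have hr : x ∈ RB b s C (b x) Y Z := by
    by_contra h; exact hxZ ((hZ x).mpr h)
  rw [RB, Finset.mem_sdiff] at hr
  obtain ⟨hyb, _⟩ := hr
  set f := b x with hf
  set A := Y ∩ Z with hA
  have key := fts_choice_eq hC hY hZ f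
  have hsub1 : C f (Yb b f Y ∪ Zs s f Z) ⊆ Yb b f Y ∪ Zs s f (Xf b s f A) := by
    rw [key]
    intro w hw
    obtain ⟨hwA, hbs⟩ := fts_mem_Xf.mp hw
    rcases hbs with hbf | hsf
    · exact Finset.mem_union_left _
        (fts_mem_Yb.mpr ⟨(Finset.mem_inter.mp hwA).1, hbf⟩)
    · exact Finset.mem_union_right _ (fts_mem_Zs.mpr ⟨hw, hsf⟩)
  have hsub2 : Yb b f Y ∪ Zs s f (Xf b s f A) ⊆ Yb b f Y ∪ Zs s f Z := by
    intro w hw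
    rcases Finset.mem_union.mp hw with hwb | hws
    · exact Finset.mem_union_left _ hwb
    · obtain ⟨hwX, hsf⟩ := fts_mem_Zs.mp hws
      exact Finset.mem_union_right _
        (fts_mem_Zs.mpr ⟨(Finset.mem_inter.mp (fts_mem_Xf.mp hwX).1).2, hsf⟩)
  have hbig : C f (Yb b f Y ∪ Zs s f (Xf b s f A)) = Xf b s f A := by
    rw [hirc f _ _ hsub1 hsub2, key]
  have hsub3 : C f (Yb b f Y ∪ Zs s f (Xf b s f A)) ⊆ Xf b s f A ∪ {x} := by
    rw [hbig]; exact Finset.subset_union_left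
  have hsub4 : Xf b s f A ∪ {x} ⊆ Yb b f Y ∪ Zs s f (Xf b s f A) := by
    intro w hw
    rcases Finset.mem_union.mp hw with hwX | hwx
    · exact (key ▸ hsub1) hwX
    · rw [Finset.mem_singleton] at hwx
      subst hwx
      exact Finset.mem_union_left _ hyb
  have hsmall : C f (Xf b s f A ∪ {x}) = Xf b s f A := by
    rw [hirc f _ _ hsub3 hsub4, hbig]
  rw [hsmall] at hx
  exact hxZ (Finset.mem_inter.mp (fts_mem_Xf.mp hx).1).2

/-- Claim 3: rational pairs propagate membership in `Y` along the trail. -/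
lemma fts_claim3 (hC : ∀ (f : F) (A : Finset X), C f A ⊆ A)
    (hfs : FullySubstitutable b s C) (hirc : IRC C)
    (hY : ∀ x : X, x ∈ Y ↔ x ∉ RS b s C (s x) Z Y)
    (hZ : ∀ x : X, x ∈ Z ↔ x ∉ RB b s C (b x) Y Z) {f : F} {y z : X}
    (hby : b y = f) (hsz : s z = f) (hyY : y ∈ Y)
    (hz : z ∈ C f (Xf b s f (Y ∩ Z) ∪ {y, z})) : z ∈ Y := by
  by_contra hzY
  set A := Y ∩ Z with hA
  have hr : z ∈ RS b s C f Z Y := by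
    have : z ∈ RS b s C (s z) Z Y := by
      by_contra h; exact hzY ((hY z).mpr h)
    rwa [hsz] at this
  have hzZ : z ∈ Z := (fts_mem_Zs.mp (Finset.mem_sdiff.mp hr).1).1
  set Y₂ : Finset X := Xf b s f A ∪ {y} with hY₂
  have hY₂Y : Y₂ ⊆ Y := by
    intro w hw
    rcases Finset.mem_union.mp hw with hwX | hwy
    · exact (Finset.mem_inter.mp (fts_mem_Xf.mp hwX).1).1
    · rw [Finset.mem_singleton] at hwy; subst hwy; exact hyY
  have hRSmono : RS b s C f Z Y ⊆ RS b s C f Z Y₂ := hfs.2.2.2 f Z Y₂ Y hY₂Y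
  have key := fts_choice_eq hC hY hZ f
  have hsub1 : C f (Zs s f Z ∪ Yb b f Y₂) ⊆ Xf b s f A ∪ {y, z} := by
    intro w hw
    have hw' := hC f _ hw
    rcases Finset.mem_union.mp hw' with hws | hwb
    · have hsf := (fts_mem_Zs.mp hws).2
      have hcs2 : w ∈ CS b s C f Z Y₂ := Finset.mem_filter.mpr ⟨hw, hsf⟩
      have hnot : w ∉ RS b s C f Z Y :=
        fun h => (Finset.mem_sdiff.mp (hRSmono h)).2 hcs2
      have hcs : w ∈ CS b s C f Z Y := by
        by_contra hn
        exact hnot (Finset.mem_sdiff.mpr ⟨hws, hn⟩)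
      have hcd := (Finset.mem_filter.mp hcs).1
      rw [Finset.union_comm, key] at hcd
      exact Finset.mem_union_left _ hcd
    · have hwY₂ := (fts_mem_Yb.mp hwb).1
      rcases Finset.mem_union.mp hwY₂ with hwX | hwy
      · exact Finset.mem_union_left _ hwX
      · rw [Finset.mem_singleton] at hwy; subst hwy
        exact Finset.mem_union_right _ (Finset.mem_insert_self _ _)
  have hsub2 : Xf b s f A ∪ {y, z} ⊆ Zs s f Z ∪ Yb b f Y₂ := by
    intro w hw
    rcases Finset.mem_union.mp hw with hwX | hwyz
    · obtain ⟨hwA, hbs⟩ := fts_mem_Xf.mp hwX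
      rcases hbs with hbf | hsf
      · exact Finset.mem_union_right _
          (fts_mem_Yb.mpr ⟨Finset.mem_union_left _ hwX, hbf⟩)
      · exact Finset.mem_union_left _
          (fts_mem_Zs.mpr ⟨(Finset.mem_inter.mp hwA).2, hsf⟩)
    · rcases Finset.mem_insert.mp hwyz with rfl | hwz
      · exact Finset.mem_union_right _
          (fts_mem_Yb.mpr ⟨Finset.mem_union_right _ (Finset.mem_singleton_self _), hby⟩)
      · rw [Finset.mem_singleton] at hwz; subst hwz
        exact Finset.mem_union_left _ (fts_mem_Zs.mpr ⟨hzZ, hsz⟩)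
  have heq := hirc f _ _ hsub1 hsub2
  rw [heq] at hz
  have hcs2 : z ∈ CS b s C f Z Y₂ := Finset.mem_filter.mpr ⟨hz, hsz⟩
  exact (Finset.mem_sdiff.mp (hRSmono hr)).2 hcs2

lemma fts_Xf_singleton {f : F} {w : X} (h : b w = f ∨ s w = f) :
    Xf b s f {w} = {w} := by
  rw [Xf, Finset.filter_singleton, if_pos h]

lemma fts_Xf_pair {f : F} {y z : X} (hy : b y = f ∨ s y = f)
    (hz : b z = f ∨ s z = f) : Xf b s f {y, z} = {y, z} := by
  ext w
  rw [fts_mem_Xf]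
  constructor
  · exact And.left
  · intro hw
    refine ⟨hw, ?_⟩
    rcases Finset.mem_insert.mp hw with rfl | hw'
    · exact hy
    · rw [Finset.mem_singleton.mp hw']; exact hz

end FTSMain
/-- any contract network with fully substitutable choice
functions satisfying IRC has a fully trail-stable outcome. -/
theorem exists_fullyTrailStable [Fintype X] (b s : X → F)
    (C : F → Finset X → Finset X)
    (hC : ∀ (f : F) (A : Finset X), C f A ⊆ A)
    (hfs : FullySubstitutable b s C) (hirc : IRC C) :
    ∃ A : Finset X, FullyTrailStable b s C A := by
  obtain ⟨Y, Z, hY, hZ⟩ := fts_exists_fixed b s C hfs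
  refine ⟨Y ∩ Z, fts_acceptable hC hirc hY hZ, ?_⟩
  rintro ⟨M, x, hM, hinj, hadj, hnA, hfirst, hmid, hlast⟩
  have hallY : ∀ i, i < M → x i ∈ Y := by
    intro i
    induction i with
    | zero =>
      intro _
      apply fts_claim1 hC hirc hY hZ
      have h0 := hfirst
      rw [Rational, fts_Xf_singleton (Or.inr rfl)] at h0
      exact h0 (Finset.mem_singleton_self _)
    | succ n ih =>
      intro hi
      have hYn := ih (by omega)
      have hmid' := hmid (n + 1) (by omega) hi
      simp only [Nat.add_sub_cancel] at hmid'
      have hsz : s (x (n + 1)) = b (x n) := (hadj n hi).symm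
      rw [Rational, fts_Xf_pair (Or.inl rfl) (Or.inr hsz)] at hmid'
      exact fts_claim3 hC hfs hirc hY hZ rfl hsz hYn
        (hmid' (Finset.mem_insert_of_mem (Finset.mem_singleton_self _)))
  have hYlast : x (M - 1) ∈ Y := hallY (M - 1) (by omega)
  have hZlast : x (M - 1) ∈ Z := by
    apply fts_claim2 hC hirc hY hZ
    have hl := hlast
    rw [Rational, fts_Xf_singleton (Or.inl rfl)] at hl
    exact hl (Finset.mem_singleton_self _)
  exact hnA (M - 1) (by omega) (Finset.mem_inter.mpr ⟨hYlast, hZlast⟩)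
end

section
/- In any contract network with fully substitutable choice functions satisfying IRC, every fully trail-stable outcome is trail-stable. -/
variable {F X : Type*} [DecidableEq X] [DecidableEq F]

/-! Walk forward along a blocking trail whose final segments are rational. At the buyer `f`
of the current contract `x k`, the final segment from `x k` is `(A, f)`-rational. By upstream
substitutability and IRC, either `{x k}` alone is `(A, f)`-rational, and the locally blocking
trail built so far ends there, or some later contract `x j` sold by `f` is chosen alongside
`x k`. In the second case downstream substitutability and IRC make `{x k, x j}` or `{x j}`
`(A, f)`-rational, so the trail is extended by `x j` or restarted at `x j`. Indices increase, so
the walk ends in a locally blocking trail. Rational initial segments become rational final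
segments when the trail is reversed and buyers and sellers swap roles, which preserves all the
notions involved. -/

open Finset

section Choice

variable {b s : X → F} {C : F → Finset X → Finset X}

theorem rational_swap {W Y : Finset X} {f : F} :
    Rational s b C W Y f ↔ Rational b s C W Y f := by
  simp only [Rational, Xf, or_comm]

theorem FullySubstitutable.swap (h : FullySubstitutable b s C) : FullySubstitutable s b C :=
  ⟨h.2.1, h.1, h.2.2.2, h.2.2.1⟩

theorem Xf_eq_Yb_union_Zs (f : F) (Y : Finset X) : Xf b s f Y = Yb b f Y ∪ Zs s f Y :=
  filter_or _ _ _

theorem rational_iff_subset {W Y : Finset X} {f : F} (hY : ∀ x ∈ Y, b x = f ∨ s x = f) :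
    Rational b s C W Y f ↔ Y ⊆ C f (Xf b s f W ∪ Y) := by
  rw [Rational, Xf, filter_true_of_mem hY]

theorem mem_choice_of_upstream_subset (hfs : FullySubstitutable b s C) {Y' Y Z : Finset X}
    {f : F} {y : X} (hY : Y' ⊆ Y) (hy : y ∈ Y') (hby : b y = f)
    (h : y ∈ C f (Yb b f Y ∪ Zs s f Z)) : y ∈ C f (Yb b f Y' ∪ Zs s f Z) := by
  by_contra hn
  have hrej : y ∈ RB b s C f Y' Z :=
    mem_sdiff.2 ⟨mem_filter.2 ⟨hy, hby⟩, fun hc => hn (mem_filter.1 hc).1⟩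
  exact (mem_sdiff.1 (hfs.1 f Y' Y Z hY hrej)).2 (mem_filter.2 ⟨h, hby⟩)

theorem mem_choice_of_downstream_subset (hfs : FullySubstitutable b s C) {Z' Z Y : Finset X}
    {f : F} {z : X} (hZ : Z' ⊆ Z) (hz : z ∈ Z') (hsz : s z = f)
    (h : z ∈ C f (Zs s f Z ∪ Yb b f Y)) : z ∈ C f (Zs s f Z' ∪ Yb b f Y) :=
  mem_choice_of_upstream_subset hfs.swap hZ hz hsz h

theorem rational_singleton_or_exists_partner (hC : ∀ (f : F) (A : Finset X), C f A ⊆ A)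
    (hfs : FullySubstitutable b s C) (hirc : IRC C) {W S : Finset X} {f : F} {y : X}
    (hS : Rational b s C W S f) (hy : y ∈ S) (hby : b y = f) :
    Rational b s C W {y} f ∨ ∃ z ∈ S, z ≠ y ∧ s z = f ∧
      (Rational b s C W {y, z} f ∨ Rational b s C W {z} f) := by
  have hy₀ : y ∈ C f (Yb b f (W ∪ S) ∪ Zs s f (W ∪ S)) := by
    rw [← Xf_eq_Yb_union_Zs, Xf, filter_union]
    exact hS (mem_filter.2 ⟨hy, .inl hby⟩)
  set V := Yb b f (W ∪ {y}) ∪ Zs s f (W ∪ S) with hV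
  have hyV : y ∈ C f V := mem_choice_of_upstream_subset hfs
    (union_subset_union_right (singleton_subset_iff.2 hy)) (by simp) hby hy₀
  by_cases hpartner : ∃ z ∈ S, z ≠ y ∧ s z = f ∧ z ∈ C f V
  · obtain ⟨z, hzS, hzy, hsz, hzV⟩ := hpartner
    refine .inr ⟨z, hzS, hzy, hsz, ?_⟩
    have hU : Zs s f (W ∪ {y, z}) ∪ Yb b f (W ∪ {y}) = Xf b s f W ∪ {y, z} := by
      ext u
      simp only [Zs, Yb, Xf, mem_union, mem_filter, mem_insert, mem_singleton]
      constructor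
      · rintro (⟨hu | rfl | rfl, h⟩ | ⟨hu | rfl, h⟩) <;> tauto
      · rintro (⟨hu, h⟩ | rfl | rfl) <;> tauto
    have hzU : z ∈ C f (Xf b s f W ∪ {y, z}) := by
      rw [← hU]
      refine mem_choice_of_downstream_subset hfs ?_ (by simp) hsz (by rwa [union_comm])
      exact union_subset_union_right (insert_subset hy (singleton_subset_iff.2 hzS))
    by_cases hyU : y ∈ C f (Xf b s f W ∪ {y, z})
    · left
      rw [rational_iff_subset (by simp [hby, hsz])]
      exact insert_subset hyU (singleton_subset_iff.2 hzU)
    · right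
      rw [rational_iff_subset (by simp [hsz]), singleton_subset_iff,
        hirc f _ (Xf b s f W ∪ {z}) ?_ ?_]
      · exact hzU
      · intro u hu
        have := hC f _ hu
        simp only [mem_union, mem_insert, mem_singleton] at this ⊢
        rcases this with h | rfl | rfl
        exacts [.inl h, absurd hu hyU, .inr rfl]
      · exact union_subset_union_right (singleton_subset_iff.2 (by simp))
  · left
    push Not at hpartner
    rw [rational_iff_subset (by simp [hby]), singleton_subset_iff,
      hirc f V (Xf b s f W ∪ {y}) ?_ ?_]
    · exact hyV
    · intro u hu
      have := hC f V hu
      simp only [hV, Yb, Zs, Xf, mem_union, mem_filter, mem_singleton] at this ⊢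
      rcases this with ⟨hu' | rfl, h⟩ | ⟨hu' | hu', h⟩
      · exact .inl ⟨hu', .inl h⟩
      · exact .inr rfl
      · exact .inl ⟨hu', .inr h⟩
      · by_contra hne
        exact hpartner u hu' (by tauto) h hu
    · intro u
      simp only [hV, Yb, Zs, Xf, mem_union, mem_filter, mem_singleton]
      rintro (⟨hu, h | h⟩ | rfl) <;> tauto

end Choice

section Trail

variable {b s : X → F} {C : F → Finset X → Finset X} {A : Finset X} {x : ℕ → X} {M : ℕ}

/-- `σ` increases so that the contracts of the prefix are distinct as soon as those of `x`
are. -/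
def LocallyBlockingPrefix (b s : X → F) (C : F → Finset X → Finset X) (A : Finset X)
    (x : ℕ → X) (k : ℕ) : Prop :=
  ∃ (N : ℕ) (σ : ℕ → ℕ), 0 < N ∧ StrictMono σ ∧ σ (N - 1) = k ∧
    Rational b s C A {x (σ 0)} (s (x (σ 0))) ∧
    ∀ i, 0 < i → i < N → b (x (σ (i - 1))) = s (x (σ i)) ∧
      Rational b s C A {x (σ (i - 1)), x (σ i)} (b (x (σ (i - 1))))

theorem locallyBlockingPrefix_of_rational {j : ℕ} (h : Rational b s C A {x j} (s (x j))) :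
    LocallyBlockingPrefix b s C A x j :=
  ⟨1, (j + ·), one_pos, fun _ _ h => by simpa, by simp, by simpa using h,
    fun _ _ _ => by omega⟩

theorem LocallyBlockingPrefix.snoc {k j : ℕ} (h : LocallyBlockingPrefix b s C A x k)
    (hkj : k < j) (hlink : b (x k) = s (x j)) (hpair : Rational b s C A {x k, x j} (b (x k))) :
    LocallyBlockingPrefix b s C A x j := by
  obtain ⟨N, σ, hN, hσ, hσk, hstart, hpairs⟩ := h
  have hσle : ∀ i < N, σ i ≤ k := fun i hi => hσk ▸ hσ.monotone (by omega)
  refine ⟨N + 1, fun i => if i < N then σ i else j + (i - N), by omega, ?_, by simp, ?_, ?_⟩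
  · intro i i' hii'
    dsimp only
    split_ifs with hi hi'
    · exact hσ hii'
    · have := hσle i hi; omega
    · omega
    · omega
  · simpa [hN] using hstart
  · intro i h0 hi
    by_cases hiN : i < N
    · simpa [hiN, show i - 1 < N by omega] using hpairs i h0 hiN
    · obtain rfl : N = i := by omega
      simpa [show N - 1 < N by omega, hσk] using ⟨hlink, hpair⟩

theorem LocallyBlockingPrefix.locallyBlockingTrail {k : ℕ} (h : LocallyBlockingPrefix b s C A x k)
    (hinj : ∀ i j, i < M → j < M → x i = x j → i = j) (hnotA : ∀ i, i < M → x i ∉ A)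
    (hk : k < M) (hend : Rational b s C A {x k} (b (x k))) : LocallyBlockingTrail b s C A := by
  obtain ⟨N, σ, hN, hσ, hσk, hstart, hpairs⟩ := h
  have hσM : ∀ i < N, σ i < M := fun i hi =>
    (hσ.monotone (by omega : i ≤ N - 1)).trans_lt (hσk ▸ hk)
  refine ⟨N, x ∘ σ, hN,
    fun i i' hi hi' he => hσ.injective (hinj _ _ (hσM i hi) (hσM i' hi') he),
    fun i hi => by simpa using (hpairs (i + 1) (by omega) hi).1, fun i hi => hnotA _ (hσM i hi),
    hstart, fun i h0 hi => (hpairs i h0 hi).2, by simpa [hσk] using hend⟩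

theorem locallyBlockingTrail_of_prefix_of_finalSegments
    (hC : ∀ (f : F) (A : Finset X), C f A ⊆ A) (hfs : FullySubstitutable b s C) (hirc : IRC C)
    (hinj : ∀ i j, i < M → j < M → x i = x j → i = j) (hnotA : ∀ i, i < M → x i ∉ A)
    (hFS : ∀ i, 0 < i → i < M →
      Rational b s C A ((Finset.Ico (i - 1) M).image x) (b (x (i - 1))))
    (hend : Rational b s C A {x (M - 1)} (b (x (M - 1))))
    (k : ℕ) (hk : k < M) (h : LocallyBlockingPrefix b s C A x k) :
    LocallyBlockingTrail b s C A := by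
  by_cases hlast : k = M - 1
  · subst hlast
    exact h.locallyBlockingTrail hinj hnotA hk hend
  have hS := hFS (k + 1) (by omega) (by omega)
  rw [Nat.add_sub_cancel] at hS
  rcases rational_singleton_or_exists_partner hC hfs hirc hS
      (mem_image_of_mem x (by simp; omega)) rfl with hsingle | ⟨_, hz, hzk, hlink, hnext⟩
  · exact h.locallyBlockingTrail hinj hnotA hk hsingle
  obtain ⟨j, hj, rfl⟩ := mem_image.1 hz
  have hkj : k < j := lt_of_le_of_ne (mem_Ico.1 hj).1 (by rintro rfl; exact hzk rfl)
  have hprefix : LocallyBlockingPrefix b s C A x j := by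
    rcases hnext with hpair | hsingle
    · exact h.snoc hkj hlink.symm hpair
    · exact locallyBlockingPrefix_of_rational (hlink ▸ hsingle)
  exact locallyBlockingTrail_of_prefix_of_finalSegments hC hfs hirc hinj hnotA hFS hend j
    (mem_Ico.1 hj).2 hprefix
termination_by M - k

theorem locallyBlockingTrail_of_finalSegments (hC : ∀ (f : F) (A : Finset X), C f A ⊆ A)
    (hfs : FullySubstitutable b s C) (hirc : IRC C) (hM : 0 < M)
    (hinj : ∀ i j, i < M → j < M → x i = x j → i = j) (hnotA : ∀ i, i < M → x i ∉ A)
    (hstart : Rational b s C A {x 0} (s (x 0)))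
    (hFS : ∀ i, 0 < i → i < M →
      Rational b s C A ((Finset.Ico (i - 1) M).image x) (b (x (i - 1))))
    (hend : Rational b s C A {x (M - 1)} (b (x (M - 1)))) :
    LocallyBlockingTrail b s C A :=
  locallyBlockingTrail_of_prefix_of_finalSegments hC hfs hirc hinj hnotA hFS hend 0 hM
    (locallyBlockingPrefix_of_rational hstart)

theorem LocallyBlockingTrail.of_swap (h : LocallyBlockingTrail s b C A) :
    LocallyBlockingTrail b s C A := by
  obtain ⟨M, x, hM, hinj, hlink, hnotA, hstart, hpairs, hend⟩ := h
  refine ⟨M, fun i => x (M - 1 - i), hM,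
    fun i j hi hj he => by have := hinj _ _ (by omega) (by omega) he; omega,
    fun i hi => ?_, fun i hi => hnotA _ (by omega), by simpa using rational_swap.1 hend,
    fun i h0 hi => ?_, by simpa using rational_swap.1 hstart⟩
  · have := hlink (M - 1 - (i + 1)) (by omega)
    rw [show M - 1 - (i + 1) + 1 = M - 1 - i by omega] at this
    exact this.symm
  · have hpair := hpairs (M - i) (by omega) (by omega)
    have hl := hlink (M - i - 1) (by omega)
    rw [show M - i - 1 + 1 = M - i by omega] at hl
    dsimp only
    rw [show M - 1 - (i - 1) = M - i by omega, show M - 1 - i = M - i - 1 by omega, pair_comm,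
      ← hl]
    exact rational_swap.1 hpair

theorem locallyBlockingTrail_of_initialSegments (hC : ∀ (f : F) (A : Finset X), C f A ⊆ A)
    (hfs : FullySubstitutable b s C) (hirc : IRC C) (hM : 0 < M)
    (hinj : ∀ i j, i < M → j < M → x i = x j → i = j)
    (hlink : ∀ i, i + 1 < M → b (x i) = s (x (i + 1))) (hnotA : ∀ i, i < M → x i ∉ A)
    (hstart : Rational b s C A {x 0} (s (x 0)))
    (hIS : ∀ i, 0 < i → i < M →
      Rational b s C A ((Finset.range (i + 1)).image x) (b (x (i - 1))))
    (hend : Rational b s C A {x (M - 1)} (b (x (M - 1)))) :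
    LocallyBlockingTrail b s C A := by
  refine LocallyBlockingTrail.of_swap
    (locallyBlockingTrail_of_finalSegments (x := fun i => x (M - 1 - i)) hC hfs.swap hirc hM
      (fun i j hi hj he => ?_) (fun i hi => hnotA _ (by omega))
      (by simpa using rational_swap.2 hend) (fun i h0 hi => ?_)
      (by simpa using rational_swap.2 hstart))
  · have := hinj _ _ (by omega) (by omega) he
    omega
  · have hseg : (Ico (i - 1) M).image (fun i => x (M - 1 - i)) = (range (M - i + 1)).image x := by
      ext u
      simp only [mem_image, mem_Ico, mem_range]
      constructor
      · rintro ⟨t, ht, rfl⟩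
        exact ⟨M - 1 - t, by omega, rfl⟩
      · rintro ⟨t, ht, rfl⟩
        exact ⟨M - 1 - t, by omega, by rw [show M - 1 - (M - 1 - t) = t by omega]⟩
    have hl := hlink (M - i - 1) (by omega)
    rw [show M - i - 1 + 1 = M - i by omega] at hl
    rw [rational_swap, hseg, show M - 1 - (i - 1) = M - i by omega, ← hl]
    exact hIS (M - i) (by omega) (by omega)

end Trail

theorem fullyTrailStable_implies_trailStable_general (b s : X → F)
    (C : F → Finset X → Finset X)
    (hC : ∀ (f : F) (A : Finset X), C f A ⊆ A)
    (hfs : FullySubstitutable b s C) (hirc : IRC C)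
    (A : Finset X) (hA : FullyTrailStable b s C A) :
    TrailStable b s C A := by
  refine ⟨hA.1, ?_⟩
  rintro ⟨M, x, hM, hinj, hlink, hnotA, hstart, hIS | hFS, hend⟩
  · exact hA.2 (locallyBlockingTrail_of_initialSegments hC hfs hirc hM hinj hlink hnotA hstart
      hIS hend)
  · exact hA.2 (locallyBlockingTrail_of_finalSegments hC hfs hirc hM hinj hnotA hstart hFS hend)

/-- every fully trail-stable outcome is trail-stable. -/
theorem fullyTrailStable_implies_trailStable [Fintype X] (b s : X → F)
    (C : F → Finset X → Finset X)
    (hC : ∀ (f : F) (A : Finset X), C f A ⊆ A)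
    (hfs : FullySubstitutable b s C) (hirc : IRC C)
    (A : Finset X) (hA : FullyTrailStable b s C A) :
    TrailStable b s C A :=
  fullyTrailStable_implies_trailStable_general b s C hC hfs hirc A hA
end

section
/- In any contract network with fully substitutable choice functions satisfying IRC, every set-stable outcome is fully trail-stable. -/
variable {F X : Type*} [DecidableEq X] [DecidableEq F]

namespace SetStableAux

open Finset

variable (b s : X → F) (C : F → Finset X → Finset X) (A T : Finset X)

/-- One round of the offer process restricted to `T`. -/
def step (p : Finset X × Finset X) : Finset X × Finset X :=
  (T.filter (fun y => y ∉ RS b s C (s y) (A ∪ p.2) (A ∪ p.1)),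
   T.filter (fun y => y ∉ RB b s C (b y) (A ∪ p.1) (A ∪ p.2)))

/-- The offer process iterated from the top element `(T, ∅)`. -/
def seq (n : ℕ) : Finset X × Finset X := (step b s C A T)^[n] (T, ∅)

lemma seq_succ (n : ℕ) :
    seq b s C A T (n + 1) = step b s C A T (seq b s C A T n) := by
  simp [seq, Function.iterate_succ_apply']

lemma seq_fst_subset (n : ℕ) : (seq b s C A T n).1 ⊆ T := by
  cases n with
  | zero => simp [seq]
  | succ n => rw [seq_succ]; exact Finset.filter_subset _ _

lemma seq_snd_subset (n : ℕ) : (seq b s C A T n).2 ⊆ T := by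
  cases n with
  | zero => simp [seq]
  | succ n => rw [seq_succ]; exact Finset.filter_subset _ _

lemma seq_mono (hfs : FullySubstitutable b s C) (n : ℕ) :
    (seq b s C A T (n + 1)).1 ⊆ (seq b s C A T n).1 ∧
      (seq b s C A T n).2 ⊆ (seq b s C A T (n + 1)).2 := by
  induction n with
  | zero =>
    constructor
    · have h1 : (seq b s C A T 1).1 ⊆ T := seq_fst_subset b s C A T 1
      have h0 : (seq b s C A T 0).1 = T := by simp [seq]
      rw [h0]; exact h1
    · have h0 : (seq b s C A T 0).2 = ∅ := by simp [seq]
      rw [h0]; exact Finset.empty_subset _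
  | succ n ih =>
    obtain ⟨ihU, ihD⟩ := ih
    rw [seq_succ b s C A T n] at ihU ihD
    rw [seq_succ b s C A T (n + 1), seq_succ b s C A T n]
    constructor
    · intro y hy
      rw [step, Finset.mem_filter] at hy
      rw [step, Finset.mem_filter]
      refine ⟨hy.1, fun hc => hy.2 ?_⟩
      have s1 : RS b s C (s y) (A ∪ (seq b s C A T n).2) (A ∪ (seq b s C A T n).1) ⊆
          RS b s C (s y) (A ∪ (step b s C A T (seq b s C A T n)).2)
            (A ∪ (seq b s C A T n).1) :=
        hfs.2.1 (s y) _ _ _ (Finset.union_subset_union_right ihD)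
      have s2 : RS b s C (s y) (A ∪ (step b s C A T (seq b s C A T n)).2)
            (A ∪ (seq b s C A T n).1) ⊆
          RS b s C (s y) (A ∪ (step b s C A T (seq b s C A T n)).2)
            (A ∪ (step b s C A T (seq b s C A T n)).1) :=
        hfs.2.2.2 (s y) _ _ _ (Finset.union_subset_union_right ihU)
      exact s2 (s1 hc)
    · intro y hy
      rw [step, Finset.mem_filter] at hy
      rw [step, Finset.mem_filter]
      refine ⟨hy.1, fun hc => hy.2 ?_⟩
      have r1 : RB b s C (b y) (A ∪ (step b s C A T (seq b s C A T n)).1)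
            (A ∪ (step b s C A T (seq b s C A T n)).2) ⊆
          RB b s C (b y) (A ∪ (seq b s C A T n).1)
            (A ∪ (step b s C A T (seq b s C A T n)).2) :=
        hfs.1 (b y) _ _ _ (Finset.union_subset_union_right ihU)
      have r2 : RB b s C (b y) (A ∪ (seq b s C A T n).1)
            (A ∪ (step b s C A T (seq b s C A T n)).2) ⊆
          RB b s C (b y) (A ∪ (seq b s C A T n).1) (A ∪ (seq b s C A T n).2) :=
        hfs.2.2.1 (b y) _ _ _ (Finset.union_subset_union_right ihD)
      exact r2 (r1 hc)

lemma exists_fixed (hfs : FullySubstitutable b s C) :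
    ∃ n, seq b s C A T (n + 1) = seq b s C A T n := by
  by_contra h
  push_neg at h
  set φ : ℕ → ℕ := fun n =>
    ((seq b s C A T n).1).card + (T.card - ((seq b s C A T n).2).card) with hφ
  have hlt : ∀ n, φ (n + 1) < φ n := by
    intro n
    obtain ⟨hU, hD⟩ := seq_mono b s C A T hfs n
    have hcu : ((seq b s C A T (n + 1)).1).card ≤ ((seq b s C A T n).1).card :=
      Finset.card_le_card hU
    have hcd : ((seq b s C A T n).2).card ≤ ((seq b s C A T (n + 1)).2).card :=
      Finset.card_le_card hD
    have hdt : ((seq b s C A T (n + 1)).2).card ≤ T.card :=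
      Finset.card_le_card (seq_snd_subset b s C A T (n + 1))
    have hne : (seq b s C A T (n + 1)).1 ≠ (seq b s C A T n).1 ∨
        (seq b s C A T (n + 1)).2 ≠ (seq b s C A T n).2 := by
      by_contra hc
      push_neg at hc
      exact h n (Prod.ext hc.1 hc.2)
    rcases hne with hne | hne
    · have : ((seq b s C A T (n + 1)).1).card < ((seq b s C A T n).1).card :=
        Finset.card_lt_card (HasSubset.Subset.ssubset_of_ne hU hne)
      simp only [hφ]; omega
    · have : ((seq b s C A T n).2).card < ((seq b s C A T (n + 1)).2).card :=
        Finset.card_lt_card (HasSubset.Subset.ssubset_of_ne hD (Ne.symm hne))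
      simp only [hφ]; omega
  have hsum : ∀ n, φ n + n ≤ φ 0 := by
    intro n
    induction n with
    | zero => simp
    | succ n ih => have := hlt n; omega
  have := hsum (φ 0 + 1)
  omega

end SetStableAux

/-- every set-stable outcome is fully trail-stable. -/
theorem setStable_implies_fullyTrailStable [Fintype X] (b s : X → F)
    (C : F → Finset X → Finset X)
    (hC : ∀ (f : F) (A : Finset X), C f A ⊆ A)
    (hfs : FullySubstitutable b s C) (hirc : IRC C)
    (A : Finset X) (hA : SetStable b s C A) :
    FullyTrailStable b s C A := by
  classical
  obtain ⟨hacc, hnoblock⟩ := hA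
  refine ⟨hacc, ?_⟩
  rintro ⟨M, x, hM, hinj, hcons, hnA, hstart, hmid, hend⟩
  set T : Finset X := (Finset.range M).image x with hT
  obtain ⟨N, hfix⟩ := SetStableAux.exists_fixed b s C A T hfs
  set U : Finset X := (SetStableAux.seq b s C A T N).1 with hU
  set D : Finset X := (SetStableAux.seq b s C A T N).2 with hD
  have hUeq : U = T.filter (fun y => y ∉ RS b s C (s y) (A ∪ D) (A ∪ U)) := by
    conv_lhs => rw [hU, ← hfix, SetStableAux.seq_succ]
    rfl
  have hDeq : D = T.filter (fun y => y ∉ RB b s C (b y) (A ∪ U) (A ∪ D)) := by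
    conv_lhs => rw [hD, ← hfix, SetStableAux.seq_succ]
    rfl
  have hUT : U ⊆ T := SetStableAux.seq_fst_subset b s C A T N
  have hDT : D ⊆ T := SetStableAux.seq_snd_subset b s C A T N
  have hTA : ∀ y ∈ T, y ∉ A := by
    intro y hy hyA
    rw [hT, Finset.mem_image] at hy
    obtain ⟨i, hi, rfl⟩ := hy
    exact hnA i (Finset.mem_range.mp hi) hyA
  set Z : Finset X := U ∩ D with hZ
  -- the offer set of agent f
  set G : F → Finset X := fun f => Yb b f (A ∪ U) ∪ Zs s f (A ∪ D) with hG
  have hXfAG : ∀ f, Xf b s f A ⊆ G f := by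
    intro f y hy
    rw [Xf, Finset.mem_filter] at hy
    rcases hy.2 with hb | hs
    · exact Finset.mem_union_left _ (Finset.mem_filter.mpr
        ⟨Finset.mem_union_left _ hy.1, hb⟩)
    · exact Finset.mem_union_right _ (Finset.mem_filter.mpr
        ⟨Finset.mem_union_left _ hy.1, hs⟩)
  have hXfZG : ∀ f, Xf b s f Z ⊆ G f := by
    intro f y hy
    rw [Xf, Finset.mem_filter] at hy
    have hyU : y ∈ U := (Finset.mem_inter.mp hy.1).1
    have hyD : y ∈ D := (Finset.mem_inter.mp hy.1).2
    rcases hy.2 with hb | hs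
    · exact Finset.mem_union_left _ (Finset.mem_filter.mpr
        ⟨Finset.mem_union_right _ hyU, hb⟩)
    · exact Finset.mem_union_right _ (Finset.mem_filter.mpr
        ⟨Finset.mem_union_right _ hyD, hs⟩)
  -- chosen contracts of f from its offer set
  have hK2 : ∀ f, Xf b s f Z ⊆ C f (G f) := by
    intro f y hy
    rw [Xf, Finset.mem_filter] at hy
    have hyU : y ∈ U := (Finset.mem_inter.mp hy.1).1
    have hyD : y ∈ D := (Finset.mem_inter.mp hy.1).2
    rcases hy.2 with hb | hs
    · -- buyer side: use the fixed-point equation for D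
      have hmem := Finset.mem_filter.mp (hDeq ▸ hyD)
      rw [hb] at hmem
      have hyYb : y ∈ Yb b f (A ∪ U) :=
        Finset.mem_filter.mpr ⟨Finset.mem_union_right _ hyU, hb⟩
      have hyCB : y ∈ CB b s C f (A ∪ U) (A ∪ D) := by
        by_contra hc
        exact hmem.2 (Finset.mem_sdiff.mpr ⟨hyYb, hc⟩)
      rw [CB, Finset.mem_filter] at hyCB
      exact hyCB.1
    · -- seller side: use the fixed-point equation for U
      have hmem := Finset.mem_filter.mp (hUeq ▸ hyU)
      rw [hs] at hmem
      have hyZs : y ∈ Zs s f (A ∪ D) :=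
        Finset.mem_filter.mpr ⟨Finset.mem_union_right _ hyD, hs⟩
      have hyCS : y ∈ CS b s C f (A ∪ D) (A ∪ U) := by
        by_contra hc
        exact hmem.2 (Finset.mem_sdiff.mpr ⟨hyZs, hc⟩)
      rw [CS, Finset.mem_filter] at hyCS
      rw [hG]
      rw [Finset.union_comm] at hyCS
      exact hyCS.1
  have hK1 : ∀ f y, y ∈ C f (G f) → y ∈ Xf b s f A ∨ (y ∈ Z ∧ (b y = f ∨ s y = f)) := by
    intro f y hy
    have hyG : y ∈ G f := hC f (G f) hy
    rw [hG, Finset.mem_union] at hyG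
    rcases hyG with hyb | hys
    · rw [Yb, Finset.mem_filter] at hyb
      rcases Finset.mem_union.mp hyb.1 with hyA | hyU
      · exact Or.inl (Finset.mem_filter.mpr ⟨hyA, Or.inl hyb.2⟩)
      · -- y ∈ U and chosen by its buyer, hence y ∈ D
        have hyCB : y ∈ CB b s C f (A ∪ U) (A ∪ D) :=
          Finset.mem_filter.mpr ⟨hy, hyb.2⟩
        have hyD : y ∈ D := by
          rw [hDeq, Finset.mem_filter]
          refine ⟨hUT hyU, ?_⟩
          rw [hyb.2]
          intro hc
          exact (Finset.mem_sdiff.mp hc).2 hyCB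
        exact Or.inr ⟨Finset.mem_inter.mpr ⟨hyU, hyD⟩, Or.inl hyb.2⟩
    · rw [Zs, Finset.mem_filter] at hys
      rcases Finset.mem_union.mp hys.1 with hyA | hyD
      · exact Or.inl (Finset.mem_filter.mpr ⟨hyA, Or.inr hys.2⟩)
      · have hyCS : y ∈ CS b s C f (A ∪ D) (A ∪ U) := by
          rw [CS, Finset.union_comm]
          exact Finset.mem_filter.mpr ⟨hy, hys.2⟩
        have hyU : y ∈ U := by
          rw [hUeq, Finset.mem_filter]
          refine ⟨hDT hyD, ?_⟩
          rw [hys.2]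
          intro hc
          exact (Finset.mem_sdiff.mp hc).2 hyCS
        exact Or.inr ⟨Finset.mem_inter.mpr ⟨hyU, hyD⟩, Or.inr hys.2⟩
  -- Z is rational for every agent
  have hRat : ∀ f, Rational b s C A Z f := by
    intro f
    have hsub1 : C f (G f) ⊆ Xf b s f A ∪ Xf b s f Z := by
      intro y hy
      rcases hK1 f y hy with h | ⟨hyZ, hbs⟩
      · exact Finset.mem_union_left _ h
      · exact Finset.mem_union_right _ (Finset.mem_filter.mpr ⟨hyZ, hbs⟩)
    have hsub2 : Xf b s f A ∪ Xf b s f Z ⊆ G f :=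
      Finset.union_subset (hXfAG f) (hXfZG f)
    have hCG : C f (Xf b s f A ∪ Xf b s f Z) = C f (G f) :=
      hirc f (G f) (Xf b s f A ∪ Xf b s f Z) hsub1 hsub2
    rw [Rational, hCG]
    exact hK2 f
  -- Z is nonempty
  have hZne : Z.Nonempty := by
    rw [Finset.nonempty_iff_ne_empty]
    intro hZe
    have hKA : ∀ f, C f (G f) ⊆ Xf b s f A := by
      intro f y hy
      rcases hK1 f y hy with h | ⟨hyZ, _⟩
      · exact h
      · rw [hZe] at hyZ; exact absurd hyZ (Finset.notMem_empty y)
    -- any subset of the offer set containing A's contracts chooses within A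
    have hCS' : ∀ (f : F) (S : Finset X), Xf b s f A ⊆ S → S ⊆ G f →
        C f S ⊆ Xf b s f A := by
      intro f S h1 h2
      rw [hirc f (G f) S ((hKA f).trans h1) h2]
      exact hKA f
    have hblock : ∀ (f : F) (W : Finset X), W ⊆ G f → Rational b s C A W f →
        ∀ y, y ∈ Xf b s f W → y ∈ A := by
      intro f W hWG hrat y hy
      have hS2 : Xf b s f A ∪ Xf b s f W ⊆ G f :=
        Finset.union_subset (hXfAG f) ((Finset.filter_subset _ _).trans hWG)
      have hS1 : Xf b s f A ⊆ Xf b s f A ∪ Xf b s f W := Finset.subset_union_left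
      have := hCS' f (Xf b s f A ∪ Xf b s f W) hS1 hS2 (hrat hy)
      exact (Finset.mem_filter.mp this).1
    have hTmem : ∀ i, i < M → x i ∈ T := by
      intro i hi
      rw [hT]
      exact Finset.mem_image_of_mem x (Finset.mem_range.mpr hi)
    have hTU : ∀ i, i < M → x i ∉ U → x i ∈ D := by
      intro i hi hiU
      have hxT := hTmem i hi
      have : x i ∈ RS b s C (s (x i)) (A ∪ D) (A ∪ U) := by
        by_contra hc
        exact hiU (hUeq ▸ Finset.mem_filter.mpr ⟨hxT, hc⟩)
      have hzs := (Finset.mem_sdiff.mp this).1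
      rcases Finset.mem_union.mp (Finset.mem_filter.mp hzs).1 with hA' | hD'
      · exact absurd hA' (hnA i hi)
      · exact hD'
    have hUi : ∀ i, i < M → x i ∈ U := by
      intro i
      induction i with
      | zero =>
        intro hi
        by_contra hc
        have hxD := hTU 0 hi hc
        have hx0 : x 0 ∈ Xf b s (s (x 0)) {x 0} :=
          Finset.mem_filter.mpr ⟨Finset.mem_singleton_self _, Or.inr rfl⟩
        have hWG : ({x 0} : Finset X) ⊆ G (s (x 0)) := by
          intro y hy
          rw [Finset.mem_singleton] at hy
          subst hy
          exact Finset.mem_union_right _ (Finset.mem_filter.mpr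
            ⟨Finset.mem_union_right _ hxD, rfl⟩)
        exact hnA 0 hi (hblock (s (x 0)) {x 0} hWG hstart (x 0) hx0)
      | succ i ih =>
        intro hi
        have hiM : i < M := Nat.lt_of_succ_lt hi
        have hxiU := ih hiM
        by_contra hc
        have hxD := hTU (i + 1) hi hc
        have hbs' : s (x (i + 1)) = b (x i) := (hcons i hi).symm
        have hrat : Rational b s C A {x i, x (i + 1)} (b (x i)) := by
          have := hmid (i + 1) (Nat.succ_pos i) hi
          simpa using this
        have hWG : ({x i, x (i + 1)} : Finset X) ⊆ G (b (x i)) := by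
          intro y hy
          rcases Finset.mem_insert.mp hy with rfl | hy
          · exact Finset.mem_union_left _ (Finset.mem_filter.mpr
              ⟨Finset.mem_union_right _ hxiU, rfl⟩)
          · rw [Finset.mem_singleton] at hy
            subst hy
            exact Finset.mem_union_right _ (Finset.mem_filter.mpr
              ⟨Finset.mem_union_right _ hxD, hbs'⟩)
        have hxmem : x i ∈ Xf b s (b (x i)) {x i, x (i + 1)} :=
          Finset.mem_filter.mpr ⟨Finset.mem_insert_self _ _, Or.inl rfl⟩
        exact hnA i hiM (hblock (b (x i)) {x i, x (i + 1)} hWG hrat (x i) hxmem)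
    have hlast : x (M - 1) ∈ U := hUi (M - 1) (Nat.sub_lt hM Nat.one_pos)
    have hWG : ({x (M - 1)} : Finset X) ⊆ G (b (x (M - 1))) := by
      intro y hy
      rw [Finset.mem_singleton] at hy
      subst hy
      exact Finset.mem_union_left _ (Finset.mem_filter.mpr
        ⟨Finset.mem_union_right _ hlast, rfl⟩)
    have hxmem : x (M - 1) ∈ Xf b s (b (x (M - 1))) {x (M - 1)} :=
      Finset.mem_filter.mpr ⟨Finset.mem_singleton_self _, Or.inl rfl⟩
    exact hnA (M - 1) (Nat.sub_lt hM Nat.one_pos)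
      (hblock (b (x (M - 1))) {x (M - 1)} hWG hend (x (M - 1)) hxmem)
  have hdisj : Disjoint Z A := by
    rw [Finset.disjoint_left]
    intro y hyZ hyA
    exact hTA y (hUT (Finset.mem_inter.mp hyZ).1) hyA
  exact hnoblock ⟨Z, hZne, hdisj, hRat⟩
end

section
/- Let f be an agent with fully substitutable choice function satisfying IRC, and Y, Z disjoint sets of contracts such that Z_f is (Y,f)-rational. Then for any upstream contract z ∈ Z_f^B, one of the following holds: (1) z is (Y,f)-rational; (2) there exists z' ∈ Z_f^S such that {z, z'} is a (Y,f)-rational pair; or (3) there exist z_1,…,z_k ∈ Z_f^S such that {z, z_1,…,z_k} is (Y,f)-rational and each singleton {z_i} is (Y,f)-rational. -/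
variable {F X : Type*} [DecidableEq X] [DecidableEq F]

/-- if `Z` is `(Y,f)`-rational then every upstream contract
`z ∈ Z` of `f` is rational, part of a rational pair with some downstream
contract in `Z`, or combines with individually rational downstream contracts
of `Z`. -/
theorem rational_upstream_trichotomy (b s : X → F)
    (C : F → Finset X → Finset X)
    (hC : ∀ (f : F) (A : Finset X), C f A ⊆ A)
    (hfs : FullySubstitutable b s C) (hirc : IRC C)
    (f : F) (Y Z : Finset X) (hdisj : Disjoint Y Z)
    (hZ : Rational b s C Y Z f) :
    ∀ z ∈ Z, b z = f →
      (Rational b s C Y {z} f ∨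
       (∃ z' ∈ Z, s z' = f ∧ RationalPair b s C Y f z z') ∨
       (∃ zs : Finset X, zs.Nonempty ∧ zs ⊆ Z ∧ (∀ z' ∈ zs, s z' = f) ∧
         Rational b s C Y (insert z zs) f ∧
         ∀ z' ∈ zs, Rational b s C Y {z'} f)) := by
  classical
  intro z hzZ hbz
  have hzY : z ∉ Y := fun h => (Finset.disjoint_left.mp hdisj h) hzZ
  have memXf : ∀ (W : Finset X) (x : X),
      x ∈ Xf b s f W ↔ x ∈ W ∧ (b x = f ∨ s x = f) := by
    intro W x; simp [Xf]
  have memYb : ∀ (W : Finset X) (x : X), x ∈ Yb b f W ↔ x ∈ W ∧ b x = f := by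
    intro W x; simp [Yb]
  have memZs : ∀ (W : Finset X) (x : X), x ∈ Zs s f W ↔ x ∈ W ∧ s x = f := by
    intro W x; simp [Zs]
  -- Step A: z is chosen from the full offer set
  have hG : Yb b f (Y ∪ Z) ∪ Zs s f (Y ∪ Z) = Xf b s f Y ∪ Xf b s f Z := by
    ext x
    simp only [Finset.mem_union, memYb, memZs, memXf, Finset.mem_union]
    tauto
  have hzChosen : z ∈ C f (Yb b f (Y ∪ Z) ∪ Zs s f (Y ∪ Z)) := by
    rw [hG]
    exact hZ ((memXf Z z).mpr ⟨hzZ, Or.inl hbz⟩)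
  have hznotRB : z ∉ RB b s C f (Y ∪ Z) (Y ∪ Z) := by
    simp only [RB, Finset.mem_sdiff, CB, Finset.mem_filter, not_and, not_not]
    intro _
    exact fun h => h hzChosen hbz
  -- Step B: shrink upstream offers to Y ∪ {z}
  have hsub1 : Y ∪ {z} ⊆ Y ∪ Z := by
    intro x hx
    rcases Finset.mem_union.mp hx with h | h
    · exact Finset.mem_union_left _ h
    · exact Finset.mem_union_right _ (by simpa using (Finset.mem_singleton.mp h ▸ hzZ))
  have hznotRB2 : z ∉ RB b s C f (Y ∪ {z}) (Y ∪ Z) :=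
    fun h => hznotRB (hfs.1 f (Y ∪ {z}) (Y ∪ Z) (Y ∪ Z) hsub1 h)
  set A0 : Finset X := Yb b f (Y ∪ {z}) ∪ Zs s f (Y ∪ Z) with hA0def
  have hzA0 : z ∈ C f A0 := by
    by_contra hcon
    apply hznotRB2
    simp only [RB, Finset.mem_sdiff, CB, Finset.mem_filter]
    exact ⟨(memYb _ z).mpr ⟨Finset.mem_union_right _ (Finset.mem_singleton_self z), hbz⟩,
      fun h => hcon h.1⟩
  -- the downstream contracts of Z chosen alongside z
  set zs : Finset X := (Zs s f Z).filter (fun x => x ∈ C f A0) with hzsdef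
  have hzsZs : ∀ x ∈ zs, x ∈ Z ∧ s x = f ∧ x ∈ C f A0 := by
    intro x hx
    rw [hzsdef, Finset.mem_filter, memZs] at hx
    exact ⟨hx.1.1, hx.1.2, hx.2⟩
  set A1 : Finset X := Xf b s f Y ∪ insert z zs with hA1def
  have hA1subA0 : A1 ⊆ A0 := by
    intro x hx
    rw [hA1def] at hx
    rcases Finset.mem_union.mp hx with h | h
    · rcases ((memXf Y x).mp h).2 with hb | hs
      · exact Finset.mem_union_left _ ((memYb _ x).mpr
          ⟨Finset.mem_union_left _ ((memXf Y x).mp h).1, hb⟩)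
      · exact Finset.mem_union_right _ ((memZs _ x).mpr
          ⟨Finset.mem_union_left _ ((memXf Y x).mp h).1, hs⟩)
    · rcases Finset.mem_insert.mp h with h | h
      · subst h
        exact Finset.mem_union_left _ ((memYb _ x).mpr
          ⟨Finset.mem_union_right _ (Finset.mem_singleton_self x), hbz⟩)
      · obtain ⟨h1, h2, _⟩ := hzsZs x h
        exact Finset.mem_union_right _ ((memZs _ x).mpr ⟨Finset.mem_union_right _ h1, h2⟩)
  have hCA0subA1 : C f A0 ⊆ A1 := by
    intro c hc
    have hcA0 := hC f A0 hc
    rw [hA1def]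
    rcases Finset.mem_union.mp hcA0 with h | h
    · obtain ⟨hm, hbc⟩ := (memYb _ c).mp h
      rcases Finset.mem_union.mp hm with h' | h'
      · exact Finset.mem_union_left _ ((memXf Y c).mpr ⟨h', Or.inl hbc⟩)
      · exact Finset.mem_union_right _ (Finset.mem_insert.mpr
          (Or.inl (Finset.mem_singleton.mp h')))
    · obtain ⟨hm, hsc⟩ := (memZs _ c).mp h
      rcases Finset.mem_union.mp hm with h' | h'
      · exact Finset.mem_union_left _ ((memXf Y c).mpr ⟨h', Or.inr hsc⟩)
      · exact Finset.mem_union_right _ (Finset.mem_insert.mpr (Or.inr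
          (by rw [hzsdef, Finset.mem_filter, memZs]; exact ⟨⟨h', hsc⟩, hc⟩)))
  have hCA1 : C f A1 = C f A0 := hirc f A0 A1 hCA0subA1 hA1subA0
  -- `insert z zs` is (Y,f)-rational
  have hXfins : Xf b s f (insert z zs) = insert z zs := by
    ext x
    rw [memXf]
    constructor
    · exact fun h => h.1
    · intro h
      refine ⟨h, ?_⟩
      rcases Finset.mem_insert.mp h with h | h
      · exact Or.inl (h ▸ hbz)
      · exact Or.inr (hzsZs x h).2.1
  have hA1rat : Rational b s C Y (insert z zs) f := by
    unfold Rational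
    rw [hXfins, ← hA1def, hCA1]
    intro x hx
    rcases Finset.mem_insert.mp hx with h | h
    · exact h ▸ hzA0
    · exact (hzsZs x h).2.2
  by_cases hratz : Rational b s C Y {z} f
  · exact Or.inl hratz
  by_cases hall : ∀ z' ∈ zs, Rational b s C Y {z'} f
  · rcases zs.eq_empty_or_nonempty with hzse | hzsne
    · exfalso
      apply hratz
      have : insert z zs = {z} := by rw [hzse]; rfl
      rwa [this] at hA1rat
    · exact Or.inr (Or.inr ⟨zs, hzsne, fun x hx => (hzsZs x hx).1,
        fun x hx => (hzsZs x hx).2.1, hA1rat, hall⟩)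
  · push_neg at hall
    obtain ⟨z', hz'zs, hz'nr⟩ := hall
    obtain ⟨hz'Z, hsz', hz'A0⟩ := hzsZs z' hz'zs
    -- z' survives shrinking the downstream offers to {z'}
    have hA1alt : Zs s f (Y ∪ zs) ∪ Yb b f (Y ∪ {z}) = A1 := by
      ext x
      simp only [Finset.mem_union, memZs, memYb, hA1def, memXf, Finset.mem_insert,
        Finset.mem_union, Finset.mem_singleton]
      constructor
      · rintro (⟨hY | hzs, hs⟩ | ⟨hY | hx, hb⟩)
        · exact Or.inl ⟨hY, Or.inr hs⟩
        · exact Or.inr (Or.inr hzs)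
        · exact Or.inl ⟨hY, Or.inl hb⟩
        · exact Or.inr (Or.inl hx)
      · rintro (⟨hY, hb | hs⟩ | hx | hzs)
        · exact Or.inr ⟨Or.inl hY, hb⟩
        · exact Or.inl ⟨Or.inl hY, hs⟩
        · exact Or.inr ⟨Or.inr hx, hx ▸ hbz⟩
        · exact Or.inl ⟨Or.inr hzs, (hzsZs x hzs).2.1⟩
    have hz'notRS : z' ∉ RS b s C f (Y ∪ zs) (Y ∪ {z}) := by
      simp only [RS, Finset.mem_sdiff, CS, Finset.mem_filter, not_and, not_not]
      intro _
      rw [hA1alt, hCA1]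
      exact fun h => h hz'A0 hsz'
    have hsub2 : Y ∪ {z'} ⊆ Y ∪ zs := by
      intro x hx
      rcases Finset.mem_union.mp hx with h | h
      · exact Finset.mem_union_left _ h
      · exact Finset.mem_union_right _ (Finset.mem_singleton.mp h ▸ hz'zs)
    have hz'notRS2 : z' ∉ RS b s C f (Y ∪ {z'}) (Y ∪ {z}) :=
      fun h => hz'notRS (hfs.2.1 f (Y ∪ {z'}) (Y ∪ zs) (Y ∪ {z}) hsub2 h)
    set B : Finset X := Zs s f (Y ∪ {z'}) ∪ Yb b f (Y ∪ {z}) with hBdef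
    have hz'B : z' ∈ C f B := by
      by_contra hcon
      apply hz'notRS2
      simp only [RS, Finset.mem_sdiff, CS, Finset.mem_filter]
      exact ⟨(memZs _ z').mpr ⟨Finset.mem_union_right _ (Finset.mem_singleton_self z'), hsz'⟩,
        fun h => hcon h.1⟩
    have hBeq : B = Xf b s f Y ∪ {z, z'} := by
      ext x
      simp only [hBdef, Finset.mem_union, memZs, memYb, memXf, Finset.mem_insert,
        Finset.mem_singleton]
      constructor
      · rintro (⟨hY | hx, hs⟩ | ⟨hY | hx, hb⟩)
        · exact Or.inl ⟨hY, Or.inr hs⟩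
        · exact Or.inr (Or.inr hx)
        · exact Or.inl ⟨hY, Or.inl hb⟩
        · exact Or.inr (Or.inl hx)
      · rintro (⟨hY, hb | hs⟩ | hx | hx)
        · exact Or.inr ⟨Or.inl hY, hb⟩
        · exact Or.inl ⟨Or.inl hY, hs⟩
        · exact Or.inr ⟨Or.inr hx, hx ▸ hbz⟩
        · exact Or.inl ⟨Or.inr hx, hx ▸ hsz'⟩
    have hzB : z ∈ C f B := by
      by_contra hcon
      have hsubB : C f B ⊆ Xf b s f Y ∪ {z'} := by
        intro c hc
        have hcB := hC f B hc
        rw [hBeq] at hcB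
        rcases Finset.mem_union.mp hcB with h | h
        · exact Finset.mem_union_left _ h
        · rcases Finset.mem_insert.mp h with h | h
          · exact absurd (h ▸ hc) hcon
          · exact Finset.mem_union_right _ h
      have hsubB2 : Xf b s f Y ∪ {z'} ⊆ B := by
        rw [hBeq]
        intro x hx
        rcases Finset.mem_union.mp hx with h | h
        · exact Finset.mem_union_left _ h
        · exact Finset.mem_union_right _ (Finset.mem_insert.mpr
            (Or.inr (Finset.mem_singleton.mp h ▸ Finset.mem_singleton_self z')))
      have := hirc f B (Xf b s f Y ∪ {z'}) hsubB hsubB2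
      apply hz'nr
      unfold Rational
      intro x hx
      rw [memXf, Finset.mem_singleton] at hx
      have hx' : x = z' := hx.1
      subst hx'
      have hXfz' : Xf b s f {x} = {x} := by
        ext y
        rw [memXf]
        constructor
        · exact fun h => h.1
        · intro h; exact ⟨h, Or.inr (Finset.mem_singleton.mp h ▸ hsz')⟩
      rw [hXfz', this]
      exact hz'B
    -- {z, z'} is a rational pair
    refine Or.inr (Or.inl ⟨z', hz'Z, hsz', hratz, hz'nr, ?_⟩)
    unfold Rational
    have hXfpair : Xf b s f {z, z'} = {z, z'} := by
      ext y
      rw [memXf]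
      constructor
      · exact fun h => h.1
      · intro h
        refine ⟨h, ?_⟩
        rcases Finset.mem_insert.mp h with h | h
        · exact Or.inl (h ▸ hbz)
        · exact Or.inr (Finset.mem_singleton.mp h ▸ hsz')
    rw [hXfpair, ← hBeq]
    intro y hy
    rcases Finset.mem_insert.mp hy with h | h
    · exact h ▸ hzB
    · exact Finset.mem_singleton.mp h ▸ hz'B
end
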